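/- arXiv:2009.03449 — 7 statements merged into one kernel-verified Lean document; each statement's English description precedes it below -/
import Mathlib

section
/- Suppose β has at least one nonzero component. Let (q, β, α) and (q̃, β̃, α̃) be two parameter triples of the transformation ODE model, with associated solutions Λ_x and Λ̃_x, cumulative baselines A, Ã and transformed error integrals Q, Q̃. Then Λ̃_x(t) = Λ_x(t) for every covariate value x ∈ ℝ^d and every t ≥ 0 (i.e., the two triples determine the same conditional survival distribution for every x) if and only if there exist positive constants c₁ and c₂ such that β̃ = c₁·β, Ã(t) = c₂·(A(t))^{c₁} for all t ≥ 0, and Q̃(u) = c₂·(Q(u))^{c₁} for all u ≥ 0. -/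
open Real MeasureTheory Filter Set Topology intervalIntegral

private lemma ftc_right (f : ℝ → ℝ) (hf : ContinuousOn f (Ici 0)) {t : ℝ} (ht : 0 ≤ t) :
    HasDerivWithinAt (fun u => ∫ s in (0:ℝ)..u, f s) (f t) (Ici t) t := by
  have hint : IntervalIntegrable f volume 0 t :=
    (hf.mono (by rw [uIcc_of_le ht]; exact Icc_subset_Ici_self)).intervalIntegrable
  have hmeas : StronglyMeasurableAtFilter f (𝓝[Ioi t] t) :=
    ⟨Ici 0, mem_of_superset self_mem_nhdsWithin (fun x hx => ht.trans (le_of_lt hx)),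
      hf.aestronglyMeasurable measurableSet_Ici⟩
  exact integral_hasDerivWithinAt_right hint hmeas
    ((hf t ht).mono (fun x hx => le_of_lt (ht.trans_lt hx)))

private lemma ftc_within (f : ℝ → ℝ) (hf : ContinuousOn f (Ici 0)) {t : ℝ} (ht : 0 ≤ t) :
    HasDerivWithinAt (fun u => ∫ s in (0:ℝ)..u, f s) (f t) (Ici 0) t := by
  rcases eq_or_lt_of_le ht with rfl | ht'
  · exact ftc_right f hf le_rfl
  · have hint : IntervalIntegrable f volume 0 t :=
      (hf.mono (by rw [uIcc_of_le ht]; exact Icc_subset_Ici_self)).intervalIntegrable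
    have hca : ContinuousAt f t := (hf t ht).continuousAt (Ici_mem_nhds ht')
    exact (integral_hasDerivAt_right hint
      ⟨Ici 0, Ici_mem_nhds ht', hf.aestronglyMeasurable measurableSet_Ici⟩ hca).hasDerivWithinAt

private lemma integral_smono (f : ℝ → ℝ) (hf : ContinuousOn f (Ici 0))
    (hpos : ∀ u, 0 ≤ u → 0 < f u) :
    StrictMonoOn (fun t => ∫ s in (0:ℝ)..t, f s) (Ici 0) := by
  intro a ha b hb hab
  have h1 : IntervalIntegrable f volume 0 a :=
    (hf.mono (by rw [uIcc_of_le ha]; exact Icc_subset_Ici_self)).intervalIntegrable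
  have h2 : IntervalIntegrable f volume a b :=
    (hf.mono (by rw [uIcc_of_le hab.le]; exact fun x hx => le_trans ha hx.1)).intervalIntegrable
  have hsplit : (∫ s in (0:ℝ)..a, f s) + ∫ s in a..b, f s = ∫ s in (0:ℝ)..b, f s :=
    integral_add_adjacent_intervals h1 h2
  have hpos' : 0 < ∫ s in a..b, f s :=
    intervalIntegral_pos_of_pos_on h2 (fun x hx => hpos x (le_trans ha hx.1.le)) hab
  simp only
  linarith

private lemma sol_nonneg (q α : ℝ → ℝ) (hqpos : ∀ u, 0 ≤ u → 0 < q u)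
    (hαpos : ∀ t, 0 ≤ t → 0 < α t) (c : ℝ) (Λ : ℝ → ℝ) (hΛ0 : Λ 0 = 0)
    (hΛ : ∀ t, 0 ≤ t → HasDerivWithinAt Λ (q (Λ t) * Real.exp c * α t) (Ici 0) t) :
    ∀ t, 0 ≤ t → 0 ≤ Λ t := by
  by_contra h
  push_neg at h
  obtain ⟨t₁, ht₁, hneg⟩ := h
  have hΛcont : ContinuousOn Λ (Ici 0) := fun t ht => (hΛ t ht).continuousWithinAt
  have ht₁0 : 0 < t₁ := by
    rcases eq_or_lt_of_le ht₁ with rfl | h'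
    · rw [hΛ0] at hneg; exact absurd hneg (lt_irrefl 0)
    · exact h'
  set S : Set ℝ := {t | t ∈ Icc 0 t₁ ∧ 0 ≤ Λ t} with hSdef
  have hS0 : (0:ℝ) ∈ S := ⟨⟨le_rfl, ht₁⟩, le_of_eq hΛ0.symm⟩
  have hSbdd : BddAbove S := ⟨t₁, fun x hx => hx.1.2⟩
  have hSclosed : IsClosed S := by
    have : S = Icc 0 t₁ ∩ Λ ⁻¹' (Ici 0) := by
      ext x; simp [hSdef, mem_Icc, and_assoc]
    rw [this]
    exact ContinuousOn.preimage_isClosed_of_isClosed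
      (hΛcont.mono (fun x hx => hx.1)) isClosed_Icc isClosed_Ici
  set s := sSup S with hs
  have hsS : s ∈ S := hSclosed.csSup_mem ⟨0, hS0⟩ hSbdd
  have hs0 : 0 ≤ s := hsS.1.1
  have hst₁ : s < t₁ := by
    rcases eq_or_lt_of_le hsS.1.2 with h' | h'
    · exact absurd (h' ▸ hsS.2) (not_le.mpr hneg)
    · exact h'
  have hnegIoc : ∀ t ∈ Ioc s t₁, Λ t < 0 := by
    intro t ht
    by_contra h'
    push_neg at h'
    exact absurd (le_csSup hSbdd ⟨⟨hs0.trans ht.1.le, ht.2⟩, h'⟩) (not_le.mpr ht.1)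
  have hΛs_le : Λ s ≤ 0 := by
    have htend : Tendsto Λ (𝓝[>] s) (𝓝 (Λ s)) :=
      ((hΛcont s hs0).mono (fun x hx => hs0.trans (le_of_lt hx))).tendsto
    have hev : ∀ᶠ t in 𝓝[>] s, Λ t ≤ 0 := by
      filter_upwards [Ioo_mem_nhdsGT_of_mem ⟨le_rfl, hst₁⟩] with t ht
      exact (hnegIoc t ⟨ht.1, ht.2.le⟩).le
    exact le_of_tendsto htend hev
  have hΛs : Λ s = 0 := le_antisymm hΛs_le hsS.2
  have hD : 0 < q (Λ s) * Real.exp c * α s := by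
    rw [hΛs]
    exact mul_pos (mul_pos (hqpos 0 le_rfl) (Real.exp_pos c)) (hαpos s hs0)
  have hslope : Tendsto (slope Λ s) (𝓝[>] s) (𝓝 (q (Λ s) * Real.exp c * α s)) := by
    have := (hasDerivWithinAt_iff_tendsto_slope).mp (hΛ s hs0)
    exact this.mono_left (nhdsWithin_mono s (fun x hx => ⟨hs0.trans hx.le, ne_of_gt hx⟩))
  have hev2 : ∀ᶠ t in 𝓝[>] s, 0 < slope Λ s t :=
    hslope.eventually (eventually_gt_nhds hD)
  have hev3 : ∀ᶠ t in 𝓝[>] s, t ∈ Ioo s t₁ := Ioo_mem_nhdsGT_of_mem ⟨le_rfl, hst₁⟩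
  obtain ⟨t, hslope_t, htmem⟩ := (hev2.and hev3).exists
  have : 0 < Λ t := by
    rw [slope_def_field] at hslope_t
    have := (div_pos_iff.mp (by rw [hΛs, sub_zero] at hslope_t; exact hslope_t))
    rcases this with ⟨h2, _⟩ | ⟨_, h3⟩
    · exact h2
    · have h1 : 0 < t - s := sub_pos.mpr htmem.1
      linarith
  exact absurd this (not_lt.mpr (hnegIoc t ⟨htmem.1, htmem.2.le⟩).le)

private lemma key_identity (q α : ℝ → ℝ)
    (hqc : ContinuousOn q (Ici 0)) (hqpos : ∀ u, 0 ≤ u → 0 < q u)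
    (hαc : ContinuousOn α (Ici 0)) (hαpos : ∀ t, 0 ≤ t → 0 < α t)
    (c : ℝ) (Λ : ℝ → ℝ) (hΛ0 : Λ 0 = 0)
    (hΛ : ∀ t, 0 ≤ t → HasDerivWithinAt Λ (q (Λ t) * Real.exp c * α t) (Ici 0) t) :
    ∀ T, 0 ≤ T →
      (∫ v in (0:ℝ)..(Λ T), (q v)⁻¹) = Real.exp c * ∫ s in (0:ℝ)..T, α s := by
  have hnn := sol_nonneg q α hqpos hαpos c Λ hΛ0 hΛ
  have hΛcont : ContinuousOn Λ (Ici 0) := fun t ht => (hΛ t ht).continuousWithinAt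
  have hqinv : ContinuousOn (fun v => (q v)⁻¹) (Ici 0) :=
    hqc.inv₀ (fun u hu => (hqpos u hu).ne')
  intro T hT
  set F : ℝ → ℝ := fun t => ∫ v in (0:ℝ)..(Λ t), (q v)⁻¹ with hF
  set G : ℝ → ℝ := fun t => Real.exp c * ∫ s in (0:ℝ)..t, α s with hG
  have derivF : ∀ t ∈ Ico 0 T, HasDerivWithinAt F (Real.exp c * α t) (Ici t) t := by
    intro t ht
    have h1 : HasDerivWithinAt (fun u => ∫ v in (0:ℝ)..u, (q v)⁻¹)
        ((q (Λ t))⁻¹) (Ici 0) (Λ t) := ftc_within _ hqinv (hnn t ht.1)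
    have h2 : HasDerivWithinAt Λ (q (Λ t) * Real.exp c * α t) (Ici t) t :=
      (hΛ t ht.1).mono (fun x hx => ht.1.trans hx)
    have h3 := h1.comp t h2 (fun x hx => hnn x (ht.1.trans hx))
    have : (q (Λ t))⁻¹ * (q (Λ t) * Real.exp c * α t) = Real.exp c * α t := by
      field_simp [(hqpos _ (hnn t ht.1)).ne']
    rw [this] at h3
    exact h3
  have derivG : ∀ t ∈ Ico 0 T, HasDerivWithinAt G (Real.exp c * α t) (Ici t) t := by
    intro t ht
    exact (ftc_right α hαc ht.1).const_mul (Real.exp c)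
  have Fcont : ContinuousOn F (Icc 0 T) := by
    have hQc : ContinuousOn (fun u => ∫ v in (0:ℝ)..u, (q v)⁻¹) (Ici 0) :=
      fun u hu => (ftc_within _ hqinv hu).continuousWithinAt
    exact (hQc.comp (hΛcont.mono Icc_subset_Ici_self) (fun x hx => hnn x hx.1))
  have Gcont : ContinuousOn G (Icc 0 T) := by
    have : ContinuousOn (fun t => ∫ s in (0:ℝ)..t, α s) (Ici 0) :=
      fun u hu => (ftc_within _ hαc hu).continuousWithinAt
    exact (this.mono Icc_subset_Ici_self).const_smul (Real.exp c)
  have h0 : F 0 = G 0 := by simp [hF, hG, hΛ0]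
  exact eq_of_has_deriv_right_eq derivF derivG Fcont Gcont h0 T ⟨hT, le_rfl⟩

private lemma ipsingle {d : ℕ} (j : Fin d) (a : ℝ) (γ : Fin d → ℝ) :
    ∑ k, (Pi.single j a : Fin d → ℝ) k * γ k = a * γ j := by
  simp only [Pi.single_apply, ite_mul, zero_mul]
  simp

/-- Proposition 1 (identifiability of the linear transformation ODE model):
two parameter triples `(q, β, α)` and `(q̃, β̃, α̃)` determine the same conditional
survival distribution for every covariate value `x` if and only if `β̃ = c₁ β`,
`Ã = c₂ A^{c₁}` and `Q̃ = c₂ Q^{c₁}` for some positive constants `c₁, c₂`. -/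
theorem stmt_0
    (d : ℕ) (hd : 1 ≤ d)
    (q qt α αt : ℝ → ℝ) (β βt : Fin d → ℝ)
    (hqc : ContinuousOn q (Ici 0)) (hqpos : ∀ u, 0 ≤ u → 0 < q u)
    (hαc : ContinuousOn α (Ici 0)) (hαpos : ∀ t, 0 ≤ t → 0 < α t)
    (hqtc : ContinuousOn qt (Ici 0)) (hqtpos : ∀ u, 0 ≤ u → 0 < qt u)
    (hαtc : ContinuousOn αt (Ici 0)) (hαtpos : ∀ t, 0 ≤ t → 0 < αt t)
    (A At Q Qt : ℝ → ℝ)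
    (hA : ∀ t, A t = ∫ s in (0:ℝ)..t, α s)
    (hAt : ∀ t, At t = ∫ s in (0:ℝ)..t, αt s)
    (hQ : ∀ u, Q u = ∫ v in (0:ℝ)..u, (q v)⁻¹)
    (hQt : ∀ u, Qt u = ∫ v in (0:ℝ)..u, (qt v)⁻¹)
    (hQtop : Tendsto Q atTop atTop)
    (hQttop : Tendsto Qt atTop atTop)
    -- β has at least one nonzero component
    (hβ : ∃ i, β i ≠ 0)
    -- Λ and Λ̃ are the solutions of the two initial value problems
    (Λ Λt : (Fin d → ℝ) → ℝ → ℝ)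
    (hΛ0 : ∀ x, Λ x 0 = 0) (hΛt0 : ∀ x, Λt x 0 = 0)
    (hΛ : ∀ x, ∀ t, 0 ≤ t → HasDerivWithinAt (Λ x)
      (q (Λ x t) * Real.exp (∑ i, x i * β i) * α t) (Ici 0) t)
    (hΛt : ∀ x, ∀ t, 0 ≤ t → HasDerivWithinAt (Λt x)
      (qt (Λt x t) * Real.exp (∑ i, x i * βt i) * αt t) (Ici 0) t) :
    (∀ (x : Fin d → ℝ) (t : ℝ), 0 ≤ t → Λt x t = Λ x t) ↔
      (∃ c₁ > (0:ℝ), ∃ c₂ > (0:ℝ),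
        βt = c₁ • β ∧
        (∀ t, 0 ≤ t → At t = c₂ * (A t) ^ c₁) ∧
        (∀ u, 0 ≤ u → Qt u = c₂ * (Q u) ^ c₁)) := by
  -- basic facts
  have hqinvpos : ∀ u, 0 ≤ u → 0 < (q u)⁻¹ := fun u hu => inv_pos.mpr (hqpos u hu)
  have hqtinvpos : ∀ u, 0 ≤ u → 0 < (qt u)⁻¹ := fun u hu => inv_pos.mpr (hqtpos u hu)
  have hqinvc : ContinuousOn (fun v => (q v)⁻¹) (Ici 0) :=
    hqc.inv₀ (fun u hu => (hqpos u hu).ne')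
  have hqtinvc : ContinuousOn (fun v => (qt v)⁻¹) (Ici 0) :=
    hqtc.inv₀ (fun u hu => (hqtpos u hu).ne')
  have Qmono : StrictMonoOn Q (Ici 0) := by
    rw [show Q = fun u => ∫ v in (0:ℝ)..u, (q v)⁻¹ from funext hQ]
    exact integral_smono _ hqinvc hqinvpos
  have Qtmono : StrictMonoOn Qt (Ici 0) := by
    rw [show Qt = fun u => ∫ v in (0:ℝ)..u, (qt v)⁻¹ from funext hQt]
    exact integral_smono _ hqtinvc hqtinvpos
  have Amono : StrictMonoOn A (Ici 0) := by
    rw [show A = fun t => ∫ s in (0:ℝ)..t, α s from funext hA]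
    exact integral_smono _ hαc hαpos
  have Atmono : StrictMonoOn At (Ici 0) := by
    rw [show At = fun t => ∫ s in (0:ℝ)..t, αt s from funext hAt]
    exact integral_smono _ hαtc hαtpos
  have Q0 : Q 0 = 0 := by rw [hQ]; simp
  have Qt0 : Qt 0 = 0 := by rw [hQt]; simp
  have A0 : A 0 = 0 := by rw [hA]; simp
  have At0 : At 0 = 0 := by rw [hAt]; simp
  have hApos : ∀ t, 0 < t → 0 < A t := fun t ht => by
    rw [← A0]; exact Amono self_mem_Ici ht.le ht
  have hAtpos : ∀ t, 0 < t → 0 < At t := fun t ht => by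
    rw [← At0]; exact Atmono self_mem_Ici ht.le ht
  have hAnn : ∀ t, 0 ≤ t → 0 ≤ A t := fun t ht => by
    rcases eq_or_lt_of_le ht with rfl | h
    · rw [A0]
    · exact (hApos t h).le
  have nnΛ : ∀ x, ∀ t, 0 ≤ t → 0 ≤ Λ x t := fun x =>
    sol_nonneg q α hqpos hαpos _ (Λ x) (hΛ0 x) (hΛ x)
  have nnΛt : ∀ x, ∀ t, 0 ≤ t → 0 ≤ Λt x t := fun x =>
    sol_nonneg qt αt hqtpos hαtpos _ (Λt x) (hΛt0 x) (hΛt x)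
  have keyQ : ∀ x t, 0 ≤ t → Q (Λ x t) = Real.exp (∑ i, x i * β i) * A t := by
    intro x t ht
    rw [hQ, hA]
    exact key_identity q α hqc hqpos hαc hαpos _ (Λ x) (hΛ0 x) (hΛ x) t ht
  have keyQt : ∀ x t, 0 ≤ t → Qt (Λt x t) = Real.exp (∑ i, x i * βt i) * At t := by
    intro x t ht
    rw [hQt, hAt]
    exact key_identity qt αt hqtc hqtpos hαtc hαtpos _ (Λt x) (hΛt0 x) (hΛt x) t ht
  constructor
  · -- forward direction
    intro hEq
    obtain ⟨i₀, hi₀⟩ := hβ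
    have hA1 : 0 < A 1 := hApos 1 one_pos
    have hAt1 : 0 < At 1 := hAtpos 1 one_pos
    have keyQt' : ∀ x t, 0 ≤ t → Qt (Λ x t) = Real.exp (∑ i, x i * βt i) * At t := by
      intro x t ht
      rw [← hEq x t ht]
      exact keyQt x t ht
    have hker : ∀ x x' : Fin d → ℝ, (∑ i, x i * β i) = (∑ i, x' i * β i) →
        (∑ i, x i * βt i) = (∑ i, x' i * βt i) := by
      intro x x' hxx'
      have h1 : Q (Λ x 1) = Q (Λ x' 1) := by
        rw [keyQ x 1 zero_le_one, keyQ x' 1 zero_le_one, hxx']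
      have h2 : Λ x 1 = Λ x' 1 :=
        Qmono.injOn (nnΛ x 1 zero_le_one) (nnΛ x' 1 zero_le_one) h1
      have h3 : Real.exp (∑ i, x i * βt i) * At 1 = Real.exp (∑ i, x' i * βt i) * At 1 := by
        rw [← keyQt' x 1 zero_le_one, ← keyQt' x' 1 zero_le_one, h2]
      have h4 := mul_right_cancel₀ hAt1.ne' h3
      exact Real.exp_injective h4
    set c₁ := βt i₀ / β i₀ with hc₁def
    have hc₁β : ∀ j, βt j = c₁ * β j := by
      intro j
      by_cases hj : j = i₀
      · subst hj
        rw [hc₁def, div_mul_cancel₀ _ hi₀]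
      · have h := hker (Pi.single j (β i₀) + Pi.single i₀ (-(β j))) 0 (by
          simp only [Pi.add_apply, add_mul, Finset.sum_add_distrib, ipsingle,
            Pi.zero_apply, zero_mul, Finset.sum_const_zero]
          ring)
        simp only [Pi.add_apply, add_mul, Finset.sum_add_distrib, ipsingle,
          Pi.zero_apply, zero_mul, Finset.sum_const_zero] at h
        rw [hc₁def]
        field_simp
        linear_combination h
    have hβteq : βt = c₁ • β := funext fun j => by
      simp [hc₁β j, smul_eq_mul]
    have hPair : ∀ s : ℝ, ∃ u, 0 ≤ u ∧ Q u = Real.exp s * A 1 ∧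
        Qt u = Real.exp (c₁ * s) * At 1 := by
      intro s
      refine ⟨Λ (Pi.single i₀ (s / β i₀)) 1, nnΛ _ 1 zero_le_one, ?_, ?_⟩
      · rw [keyQ _ 1 zero_le_one, ipsingle, div_mul_cancel₀ _ hi₀]
      · rw [keyQt' _ 1 zero_le_one, ipsingle, hc₁β i₀]
        congr 2
        field_simp
    have hc₁pos : 0 < c₁ := by
      obtain ⟨u₀, hu₀, hQu₀, hQtu₀⟩ := hPair 0
      obtain ⟨u₁, hu₁, hQu₁, hQtu₁⟩ := hPair 1
      have hlt : u₀ < u₁ := by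
        have h1 : Q u₀ < Q u₁ := by
          rw [hQu₀, hQu₁]
          exact mul_lt_mul_of_pos_right (Real.exp_lt_exp.mpr one_pos) hA1
        exact (Qmono.lt_iff_lt hu₀ hu₁).mp h1
      have h2 : Qt u₀ < Qt u₁ := Qtmono hu₀ hu₁ hlt
      rw [hQtu₀, hQtu₁] at h2
      have h3 : Real.exp (c₁ * 0) < Real.exp (c₁ * 1) :=
        lt_of_mul_lt_mul_right h2 hAt1.le
      have := Real.exp_lt_exp.mp h3
      linarith
    set c₂ := At 1 / (A 1) ^ c₁ with hc₂def
    have hc₂pos : 0 < c₂ := div_pos hAt1 (Real.rpow_pos_of_pos hA1 c₁)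
    have hQtform : ∀ u, 0 ≤ u → Qt u = c₂ * (Q u) ^ c₁ := by
      intro u hu
      rcases eq_or_lt_of_le hu with rfl | hu'
      · rw [Q0, Qt0, Real.zero_rpow hc₁pos.ne', mul_zero]
      · have hQupos : 0 < Q u := by rw [← Q0]; exact Qmono self_mem_Ici hu hu'
        obtain ⟨u', hu'nn, hQu', hQtu'⟩ := hPair (Real.log (Q u / A 1))
        have harg : Real.exp (Real.log (Q u / A 1)) * A 1 = Q u := by
          rw [Real.exp_log (div_pos hQupos hA1)]
          field_simp
        have huu : u' = u := Qmono.injOn hu'nn hu (by rw [hQu', harg])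
        subst huu
        rw [hQtu']
        rw [mul_comm c₁, Real.exp_mul, Real.exp_log (div_pos hQupos hA1),
          Real.div_rpow hQupos.le hA1.le, hc₂def]
        ring
    have hAtform : ∀ t, 0 ≤ t → At t = c₂ * (A t) ^ c₁ := by
      intro t ht
      rcases eq_or_lt_of_le ht with rfl | ht'
      · rw [A0, At0, Real.zero_rpow hc₁pos.ne', mul_zero]
      · have h1 : Q (Λ 0 t) = A t := by
          rw [keyQ 0 t ht]
          simp
        have h2 : Qt (Λ 0 t) = At t := by
          rw [keyQt' 0 t ht]
          simp
        rw [← h2, hQtform _ (nnΛ 0 t ht), h1]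
    exact ⟨c₁, hc₁pos, c₂, hc₂pos, hβteq, hAtform, hQtform⟩
  · -- reverse direction
    rintro ⟨c₁, hc₁, c₂, hc₂, hβteq, hAtf, hQtf⟩ x t ht
    have hip : (∑ i, x i * βt i) = c₁ * ∑ i, x i * β i := by
      rw [Finset.mul_sum]
      refine Finset.sum_congr rfl fun i _ => ?_
      rw [hβteq]
      simp [smul_eq_mul]
      ring
    have h1 : Qt (Λt x t) = Real.exp (c₁ * ∑ i, x i * β i) * At t := by
      rw [keyQt x t ht, hip]
    have h2 : Qt (Λ x t) = Real.exp (c₁ * ∑ i, x i * β i) * At t := by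
      rw [hQtf _ (nnΛ x t ht), keyQ x t ht, hAtf t ht,
        Real.mul_rpow (Real.exp_pos _).le (hAnn t ht), mul_comm c₁,
        Real.exp_mul]
      ring
    exact Qtmono.injOn (nnΛt x t ht) (nnΛ x t ht) (h1.trans h2.symm)
end

section
/- Suppose β has at least one nonzero component, and let (q, β, α) be a parameter triple of the transformation ODE model with solutions Λ_x. The model coincides with a Cox proportional hazards model — that is, there exist β̃ ∈ ℝ^d and a continuous function ᾱ : [0,∞) → (0,∞) such that Λ_x(t) = exp(⟨x, β̃⟩)·∫₀ᵗ ᾱ(s) ds for every x ∈ ℝ^d and every t ≥ 0 — if and only if there exist positive constants c₁ and c₂ such that q(u) = c₂·u^{1−c₁} for all u > 0. -/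
open Real MeasureTheory Filter Set Topology

lemma aux_p_eq_zero (q : ℝ → ℝ) (hqc : ContinuousOn q (Ici 0))
    (h0 : 0 < q 0) {c₂ p : ℝ} (hc₂ : 0 < c₂)
    (h : ∀ u : ℝ, 0 < u → q u = c₂ * u ^ p) : p = 0 := by
  have hql : Tendsto q (𝓝[>] (0:ℝ)) (𝓝 (q 0)) :=
    (hqc 0 self_mem_Ici).mono_left (nhdsWithin_mono 0 Ioi_subset_Ici_self)
  have hmem : ∀ᶠ u in 𝓝[>] (0:ℝ), 0 < u := eventually_mem_nhdsWithin
  rcases lt_trichotomy p 0 with hp | hp | hp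
  · -- q blows up at 0+
    exfalso
    have h1 : Tendsto (fun u : ℝ => u ^ p) (𝓝[>] (0:ℝ)) atTop := by
      have h2 : Tendsto (fun u : ℝ => (u⁻¹) ^ (-p)) (𝓝[>] (0:ℝ)) atTop :=
        (tendsto_rpow_atTop (by linarith)).comp tendsto_inv_nhdsGT_zero
      refine h2.congr' ?_
      filter_upwards [hmem] with u hu
      rw [Real.inv_rpow hu.le, ← Real.rpow_neg hu.le, neg_neg]
    have h3 : Tendsto q (𝓝[>] (0:ℝ)) atTop := by
      refine (h1.const_mul_atTop hc₂).congr' ?_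
      filter_upwards [hmem] with u hu
      exact (h u hu).symm
    exact not_tendsto_atTop_of_tendsto_nhds hql h3
  · exact hp
  · -- q tends to 0 at 0+
    exfalso
    have h1 : Tendsto (fun u : ℝ => u ^ p) (𝓝[>] (0:ℝ)) (𝓝 0) := by
      have h2 : Tendsto (fun u : ℝ => ((u⁻¹) ^ p)⁻¹) (𝓝[>] (0:ℝ)) (𝓝 0) :=
        ((tendsto_rpow_atTop hp).comp tendsto_inv_nhdsGT_zero).inv_tendsto_atTop
      refine h2.congr' ?_
      filter_upwards [hmem] with u hu
      rw [Real.inv_rpow hu.le, inv_inv]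
    have h3 : Tendsto q (𝓝[>] (0:ℝ)) (𝓝 (c₂ * 0)) := by
      refine (h1.const_mul c₂).congr' ?_
      filter_upwards [hmem] with u hu
      exact (h u hu).symm
    have := tendsto_nhds_unique hql h3
    rw [mul_zero] at this
    exact absurd this h0.ne'

lemma aux_nonneg (f : ℝ → ℝ) (hf0 : f 0 = 0) (D : ℝ → ℝ)
    (hD : ∀ t, 0 ≤ t → HasDerivWithinAt f (D t) (Ici 0) t)
    (hDpos : ∀ t, 0 ≤ t → f t = 0 → 0 < D t) :
    ∀ t, 0 ≤ t → 0 ≤ f t := by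
  intro t ht
  by_contra hneg
  push_neg at hneg
  have hcont : ContinuousOn f (Ici 0) := fun s hs => (hD s hs).continuousWithinAt
  set S : Set ℝ := {s ∈ Icc 0 t | 0 ≤ f s} with hSdef
  have hS0 : (0:ℝ) ∈ S := ⟨⟨le_rfl, ht⟩, hf0.ge⟩
  have hSb : BddAbove S := ⟨t, fun s hs => hs.1.2⟩
  have hScl : IsClosed S := by
    have : S = Icc 0 t ∩ f ⁻¹' (Ici 0) := by
      ext s; simp [hSdef, mem_sep_iff, and_assoc]
    rw [this]
    exact (hcont.mono (Icc_subset_Ici_self)).preimage_isClosed_of_isClosed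
      isClosed_Icc isClosed_Ici
  set τ := sSup S with hτdef
  have hτS : τ ∈ S := hScl.csSup_mem ⟨0, hS0⟩ hSb
  obtain ⟨⟨hτ0, hτt⟩, hτnn⟩ := hτS
  have hτlt : τ < t := lt_of_le_of_ne hτt (by intro h; rw [h] at hτnn; exact absurd hτnn (not_le.2 hneg))
  have hneg' : ∀ s ∈ Ioc τ t, f s < 0 := by
    intro s hs
    by_contra h
    push_neg at h
    have hsS : s ∈ S := ⟨⟨hτ0.trans hs.1.le, hs.2⟩, h⟩
    exact absurd (le_csSup hSb hsS) (not_le.2 hs.1)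
  have hτ0' : f τ = 0 := by
    refine le_antisymm ?_ hτnn
    have hct : Tendsto f (𝓝[>] τ) (𝓝 (f τ)) :=
      (hcont τ hτ0).mono_left (nhdsWithin_mono τ (fun s hs => hτ0.trans (le_of_lt hs)))
    refine le_of_tendsto hct ?_
    filter_upwards [Ioc_mem_nhdsGT_of_mem ⟨le_rfl, hτlt⟩] with s hs
    exact (hneg' s hs).le
  have hDτ := hD τ hτ0
  have hDp : 0 < D τ := hDpos τ hτ0 hτ0'
  have hslope : Tendsto (slope f τ) (𝓝[>] τ) (𝓝 (D τ)) :=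
    (hasDerivWithinAt_iff_tendsto_slope.mp hDτ).mono_left
      (nhdsWithin_mono τ (fun s hs => ⟨hτ0.trans hs.le, hs.ne'⟩))
  have hev : ∀ᶠ s in 𝓝[>] τ, 0 < slope f τ s := hslope.eventually_const_lt hDp
  have hIoc : Ioc τ t ∈ 𝓝[>] τ := Ioc_mem_nhdsGT_of_mem ⟨le_rfl, hτlt⟩
  obtain ⟨s, hs1, hs2⟩ := (hev.and (eventually_of_mem hIoc (fun s hs => hs))).exists
  have hden : 0 < s - τ := sub_pos.2 hs2.1
  rw [slope_def_field, hτ0', sub_zero] at hs1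
  have : 0 < f s := by
    rcases div_pos_iff.mp hs1 with ⟨h1, _⟩ | ⟨_, h2⟩
    · exact h1
    · linarith
  exact absurd this (not_lt.2 (hneg' s hs2).le)

lemma aux_FTC (g : ℝ → ℝ) (hg : ContinuousOn g (Ici 0)) (t : ℝ) (ht : 0 ≤ t) :
    HasDerivWithinAt (fun s => ∫ u in (0:ℝ)..s, g u) (g t) (Ici t) t := by
  have hint : IntervalIntegrable g volume 0 t :=
    (hg.mono (by rw [uIcc_of_le ht]; exact Icc_subset_Ici_self)).intervalIntegrable
  have hsub : Ioi t ⊆ Ici 0 := fun s hs => ht.trans (le_of_lt hs)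
  have hmeas : StronglyMeasurableAtFilter g (𝓝[Ioi t] t) volume :=
    (hg.mono hsub).stronglyMeasurableAtFilter_nhdsWithin measurableSet_Ioi t
  have hcw : ContinuousWithinAt g (Ioi t) t := (hg t ht).mono hsub
  exact intervalIntegral.integral_hasDerivWithinAt_right hint hmeas hcw

/-- Proposition 2 (Cox degeneration): the transformation ODE model coincides with a Cox
proportional hazards model if and only if `q(u) = c₂ u^{1-c₁}` for some positive
constants `c₁, c₂`. -/
theorem stmt_2
    (d : ℕ) (hd : 1 ≤ d)
    (q α : ℝ → ℝ) (β : Fin d → ℝ)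
    (hqc : ContinuousOn q (Ici 0)) (hqpos : ∀ u, 0 ≤ u → 0 < q u)
    (hαc : ContinuousOn α (Ici 0)) (hαpos : ∀ t, 0 ≤ t → 0 < α t)
    (A Q : ℝ → ℝ)
    (hA : ∀ t, A t = ∫ s in (0:ℝ)..t, α s)
    (hQ : ∀ u, Q u = ∫ v in (0:ℝ)..u, (q v)⁻¹)
    (hQtop : Tendsto Q atTop atTop)
    -- β has at least one nonzero component
    (hβ : ∃ i, β i ≠ 0)
    -- Λ is the solution of the initial value problem
    (Λ : (Fin d → ℝ) → ℝ → ℝ)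
    (hΛ0 : ∀ x, Λ x 0 = 0)
    (hΛ : ∀ x, ∀ t, 0 ≤ t → HasDerivWithinAt (Λ x)
      (q (Λ x t) * Real.exp (∑ i, x i * β i) * α t) (Ici 0) t) :
    (∃ (βt : Fin d → ℝ) (ᾱ : ℝ → ℝ), ContinuousOn ᾱ (Ici 0) ∧ (∀ t, 0 ≤ t → 0 < ᾱ t) ∧
        ∀ (x : Fin d → ℝ) (t : ℝ), 0 ≤ t →
          Λ x t = Real.exp (∑ i, x i * βt i) * ∫ s in (0:ℝ)..t, ᾱ s) ↔
      (∃ c₁ > (0:ℝ), ∃ c₂ > (0:ℝ), ∀ u : ℝ, 0 < u → q u = c₂ * u ^ (1 - c₁)) := by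
  constructor
  · -- Forward direction
    rintro ⟨βt, ᾱ, hᾱc, hᾱpos, hrep⟩
    have key : ∀ (x : Fin d → ℝ) (t : ℝ), 0 ≤ t →
        q (Real.exp (∑ i, x i * βt i) * ∫ s in (0:ℝ)..t, ᾱ s) *
          Real.exp (∑ i, x i * β i) * α t
          = Real.exp (∑ i, x i * βt i) * ᾱ t := by
      intro x t ht
      have h1 : HasDerivWithinAt (Λ x)
          (q (Λ x t) * Real.exp (∑ i, x i * β i) * α t) (Ici t) t :=
        (hΛ x t ht).mono (Ici_subset_Ici.mpr ht)
      have h2 : HasDerivWithinAt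
          (fun s => Real.exp (∑ i, x i * βt i) * ∫ u in (0:ℝ)..s, ᾱ u)
          (Real.exp (∑ i, x i * βt i) * ᾱ t) (Ici t) t :=
        (aux_FTC ᾱ hᾱc t ht).const_mul _
      have h3 : HasDerivWithinAt
          (fun s => Real.exp (∑ i, x i * βt i) * ∫ u in (0:ℝ)..s, ᾱ u)
          (q (Λ x t) * Real.exp (∑ i, x i * β i) * α t) (Ici t) t :=
        h1.congr (fun s hs => (hrep x s (ht.trans hs)).symm) ((hrep x t ht).symm)
      have hu : UniqueDiffWithinAt ℝ (Ici t) t := uniqueDiffOn_Ici t t self_mem_Ici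
      have heq := (h3.derivWithin hu).symm.trans (h2.derivWithin hu)
      rwa [hrep x t ht] at heq
    have key0 : ∀ t : ℝ, 0 ≤ t → q (∫ s in (0:ℝ)..t, ᾱ s) * α t = ᾱ t := by
      intro t ht
      have h := key 0 t ht
      simpa using h
    obtain ⟨i, hi⟩ := hβ
    have hsum : ∀ (r : ℝ) (γ : Fin d → ℝ),
        (∑ j, (fun j => if j = i then r else 0) j * γ j) = r * γ i := by
      intro r γ
      simp [ite_mul, Finset.sum_ite_eq']
    set A₁ : ℝ := ∫ s in (0:ℝ)..1, ᾱ s with hA₁def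
    have hint1 : IntervalIntegrable ᾱ volume 0 1 :=
      (hᾱc.mono (by rw [uIcc_of_le zero_le_one]; exact Icc_subset_Ici_self)).intervalIntegrable
    have hA₁ : 0 < A₁ :=
      intervalIntegral.intervalIntegral_pos_of_pos_on hint1
        (fun s hs => hᾱpos s hs.1.le) one_pos
    have keyr : ∀ (r t : ℝ), 0 ≤ t →
        q (Real.exp (r * βt i) * ∫ s in (0:ℝ)..t, ᾱ s) * Real.exp (r * β i) * α t
          = Real.exp (r * βt i) * ᾱ t := by
      intro r t ht
      have h := key (fun j => if j = i then r else 0) t ht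
      rwa [hsum r β, hsum r βt] at h
    have hα1 : 0 < α 1 := hαpos 1 zero_le_one
    have hqA : 0 < q A₁ := hqpos _ hA₁.le
    have hbt : βt i ≠ 0 := by
      intro h0
      have h1 := keyr (1 / β i) 1 zero_le_one
      have h2 := key0 1 zero_le_one
      rw [h0, mul_zero, Real.exp_zero, one_mul, one_mul, one_div_mul_cancel hi,
        ← hA₁def] at h1
      rw [← hA₁def] at h2
      have h3 : q A₁ * Real.exp 1 = q A₁ := mul_right_cancel₀ hα1.ne' (h1.trans h2.symm)
      have h4 : Real.exp 1 = Real.exp 0 := by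
        rw [Real.exp_zero]
        exact mul_left_cancel₀ hqA.ne' (h3.trans (mul_one (q A₁)).symm)
      exact one_ne_zero (Real.exp_eq_exp.mp h4)
    set p : ℝ := 1 - β i / βt i with hp
    have hform : ∀ u : ℝ, 0 < u → q u = (q A₁ * A₁ ^ (-p)) * u ^ p := by
      intro u hu
      set r : ℝ := (Real.log u - Real.log A₁) / βt i with hr
      have hexp : Real.exp (r * βt i) * A₁ = u := by
        rw [hr, div_mul_cancel₀ _ hbt, Real.exp_sub, Real.exp_log hu, Real.exp_log hA₁]
        field_simp
      have h1 := keyr r 1 zero_le_one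
      rw [hexp] at h1
      rw [← key0 1 zero_le_one, ← hA₁def] at h1
      -- h1 : q u * exp (r * β i) * α 1 = exp (r * βt i) * (q A₁ * α 1)
      have h3 : q u * Real.exp (r * β i) = Real.exp (r * βt i) * q A₁ := by
        have h4 : (q u * Real.exp (r * β i)) * α 1
            = (Real.exp (r * βt i) * q A₁) * α 1 := by
          rw [mul_assoc (Real.exp (r * βt i))]
          exact h1
        exact mul_right_cancel₀ hα1.ne' h4
      have harg : r * βt i - r * β i = Real.log u * p + Real.log A₁ * (-p) := by
        rw [hr, hp]
        field_simp
        ring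
      have hpow : Real.exp (r * βt i) / Real.exp (r * β i) = u ^ p * A₁ ^ (-p) := by
        rw [← Real.exp_sub, harg, Real.exp_add, Real.rpow_def_of_pos hu,
          Real.rpow_def_of_pos hA₁]
      calc q u = (q u * Real.exp (r * β i)) / Real.exp (r * β i) := by
            field_simp
        _ = (Real.exp (r * βt i) * q A₁) / Real.exp (r * β i) := by rw [h3]
        _ = q A₁ * (Real.exp (r * βt i) / Real.exp (r * β i)) := by ring
        _ = q A₁ * (u ^ p * A₁ ^ (-p)) := by rw [hpow]
        _ = (q A₁ * A₁ ^ (-p)) * u ^ p := by ring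
    have hc₂pos : 0 < q A₁ * A₁ ^ (-p) := mul_pos hqA (Real.rpow_pos_of_pos hA₁ _)
    have hp0 : p = 0 := aux_p_eq_zero q hqc (hqpos 0 le_rfl) hc₂pos hform
    have hc₁ : β i / βt i = 1 := by
      have : (1 : ℝ) - β i / βt i = 0 := hp ▸ hp0
      linarith
    refine ⟨β i / βt i, by rw [hc₁]; exact one_pos, q A₁ * A₁ ^ (-p), hc₂pos, ?_⟩
    intro u hu
    have h := hform u hu
    rwa [hp] at h
  · -- Reverse direction
    rintro ⟨c₁, hc₁, c₂, hc₂, hq⟩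
    have hp0 : 1 - c₁ = 0 := aux_p_eq_zero q hqc (hqpos 0 le_rfl) hc₂ hq
    have hqconst : ∀ u : ℝ, 0 ≤ u → q u = c₂ := by
      intro u hu
      rcases hu.eq_or_lt with h | h
      · have hql : Tendsto q (𝓝[>] (0:ℝ)) (𝓝 (q 0)) :=
          (hqc 0 self_mem_Ici).mono_left (nhdsWithin_mono 0 Ioi_subset_Ici_self)
        have hconst : Tendsto q (𝓝[>] (0:ℝ)) (𝓝 c₂) := by
          refine tendsto_const_nhds.congr' ?_
          filter_upwards [eventually_mem_nhdsWithin] with v hv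
          rw [hq v hv, hp0, Real.rpow_zero, mul_one]
        rw [← h]
        exact tendsto_nhds_unique hql hconst
      · rw [hq u h, hp0, Real.rpow_zero, mul_one]
    have hnn : ∀ (x : Fin d → ℝ) (t : ℝ), 0 ≤ t → 0 ≤ Λ x t := by
      intro x
      exact aux_nonneg (Λ x) (hΛ0 x) _ (hΛ x) (fun t ht h0 => by
        rw [h0]
        exact mul_pos (mul_pos (hqpos 0 le_rfl) (Real.exp_pos _)) (hαpos t ht))
    refine ⟨β, fun s => c₂ * α s, continuousOn_const.mul hαc,
      fun t ht => mul_pos hc₂ (hαpos t ht), ?_⟩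
    intro x t ht
    have hᾱc' : ContinuousOn (fun s => c₂ * α s) (Ici 0) := continuousOn_const.mul hαc
    have derivf : ∀ y ∈ Ico 0 t, HasDerivWithinAt (Λ x)
        (Real.exp (∑ i, x i * β i) * (c₂ * α y)) (Ici y) y := by
      intro y hy
      have h := (hΛ x y hy.1).mono (Ici_subset_Ici.mpr hy.1)
      rw [hqconst _ (hnn x y hy.1)] at h
      have heq : Real.exp (∑ i, x i * β i) * (c₂ * α y)
          = c₂ * Real.exp (∑ i, x i * β i) * α y := by ring
      rw [heq]
      exact h
    have derivg : ∀ y ∈ Ico 0 t, HasDerivWithinAt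
        (fun s => Real.exp (∑ i, x i * β i) * ∫ u in (0:ℝ)..s, c₂ * α u)
        (Real.exp (∑ i, x i * β i) * (c₂ * α y)) (Ici y) y := by
      intro y hy
      exact (aux_FTC _ hᾱc' y hy.1).const_mul _
    have fcont : ContinuousOn (Λ x) (Icc 0 t) :=
      fun s hs => ((hΛ x s hs.1).continuousWithinAt).mono Icc_subset_Ici_self
    have gcont : ContinuousOn
        (fun s => Real.exp (∑ i, x i * β i) * ∫ u in (0:ℝ)..s, c₂ * α u) (Icc 0 t) := by
      refine continuousOn_const.mul ?_
      have hint : IntervalIntegrable (fun s => c₂ * α s) volume 0 t :=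
        (hᾱc'.mono (by rw [uIcc_of_le ht]; exact Icc_subset_Ici_self)).intervalIntegrable
      have h := intervalIntegral.continuousOn_primitive_interval' hint
        (left_mem_uIcc (a := (0:ℝ)) (b := t))
      rwa [uIcc_of_le ht] at h
    have hi0 : Λ x 0 = Real.exp (∑ i, x i * β i) * ∫ u in (0:ℝ)..(0:ℝ), c₂ * α u := by
      simp [hΛ0 x, intervalIntegral.integral_same]
    exact eq_of_has_deriv_right_eq derivf derivg fcont gcont hi0 t ⟨ht, le_rfl⟩
end

section
/- Suppose β has at least one nonzero component, and let (q, β, α) be a parameter triple of the transformation ODE model with solutions Λ_x. The model coincides with an accelerated failure time (AFT) model — that is, there exist β̃ ∈ ℝ^d and a strictly increasing function Λ̄ : [0,∞) → [0,∞) with Λ̄(0) = 0 such that Λ_x(t) = Λ̄(t·exp(⟨x, β̃⟩)) for every x ∈ ℝ^d and every t ≥ 0 — if and only if there exist positive constants c₁ and c₂ such that α(t) = c₂·t^{c₁−1} for all t > 0. -/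
open Real MeasureTheory Filter Set Topology

private lemma ftc_Ici {f : ℝ → ℝ} (hf : ContinuousOn f (Ici 0)) {b : ℝ} (hb : 0 ≤ b) :
    HasDerivWithinAt (fun u => ∫ x in (0:ℝ)..u, f x) (f b) (Ici 0) b := by
  rcases eq_or_lt_of_le hb with rfl | hb'
  · exact intervalIntegral.integral_hasDerivWithinAt_right (IntervalIntegrable.refl)
      ((hf.stronglyMeasurableAtFilter_nhdsWithin measurableSet_Ici 0).filter_mono
        (nhdsWithin_mono _ Ioi_subset_Ici_self))
      ((hf.continuousWithinAt self_mem_Ici).mono Ioi_subset_Ici_self)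
  · have hint : IntervalIntegrable f volume 0 b := by
      apply ContinuousOn.intervalIntegrable
      exact hf.mono (by rw [uIcc_of_le hb]; exact Icc_subset_Ici_self)
    have hca : ContinuousAt f b := hf.continuousAt (Ici_mem_nhds hb')
    exact (intervalIntegral.integral_hasDerivAt_right hint
      ⟨Ici 0, Ici_mem_nhds hb', hf.aestronglyMeasurable measurableSet_Ici⟩ hca).hasDerivWithinAt

private lemma strictMono_integral {f : ℝ → ℝ} (hf : ContinuousOn f (Ici 0))
    (hpos : ∀ t, 0 ≤ t → 0 < f t) :
    StrictMonoOn (fun u => ∫ x in (0:ℝ)..u, f x) (Ici 0) := by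
  intro a ha b hb hab
  rw [mem_Ici] at ha hb
  have hint : ∀ u v : ℝ, 0 ≤ u → 0 ≤ v → IntervalIntegrable f volume u v := by
    intro u v hu hv
    apply ContinuousOn.intervalIntegrable
    apply hf.mono
    intro x hx
    rcases le_total u v with h | h
    · rw [uIcc_of_le h] at hx; exact le_trans hu hx.1
    · rw [uIcc_of_ge h] at hx; exact le_trans hv hx.1
  have h2 : (∫ x in (0:ℝ)..a, f x) + ∫ x in a..b, f x = ∫ x in (0:ℝ)..b, f x :=
    intervalIntegral.integral_add_adjacent_intervals (hint 0 a le_rfl ha) (hint a b ha hb)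
  have hpos2 : 0 < ∫ x in a..b, f x :=
    intervalIntegral.intervalIntegral_pos_of_pos_on (hint a b ha hb)
      (fun x hx => hpos x (le_of_lt (lt_of_le_of_lt ha hx.1))) hab
  simp only
  linarith

/-- Proposition 2 (AFT degeneration): the transformation ODE model coincides with an
accelerated failure time model if and only if `α(t) = c₂ t^{c₁-1}` for some positive
constants `c₁, c₂`. -/
theorem stmt_3
    (d : ℕ) (hd : 1 ≤ d)
    (q α : ℝ → ℝ) (β : Fin d → ℝ)
    (hqc : ContinuousOn q (Ici 0)) (hqpos : ∀ u, 0 ≤ u → 0 < q u)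
    (hαc : ContinuousOn α (Ici 0)) (hαpos : ∀ t, 0 ≤ t → 0 < α t)
    (A Q : ℝ → ℝ)
    (hA : ∀ t, A t = ∫ s in (0:ℝ)..t, α s)
    (hQ : ∀ u, Q u = ∫ v in (0:ℝ)..u, (q v)⁻¹)
    (hQtop : Tendsto Q atTop atTop)
    -- β has at least one nonzero component
    (hβ : ∃ i, β i ≠ 0)
    -- Λ is the solution of the initial value problem
    (Λ : (Fin d → ℝ) → ℝ → ℝ)
    (hΛ0 : ∀ x, Λ x 0 = 0)
    (hΛ : ∀ x, ∀ t, 0 ≤ t → HasDerivWithinAt (Λ x)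
      (q (Λ x t) * Real.exp (∑ i, x i * β i) * α t) (Ici 0) t) :
    (∃ (βt : Fin d → ℝ) (Λb : ℝ → ℝ), StrictMonoOn Λb (Ici 0) ∧ Λb 0 = 0 ∧
        (∀ u, 0 ≤ u → 0 ≤ Λb u) ∧
        ∀ (x : Fin d → ℝ) (t : ℝ), 0 ≤ t →
          Λ x t = Λb (t * Real.exp (∑ i, x i * βt i))) ↔
      (∃ c₁ > (0:ℝ), ∃ c₂ > (0:ℝ), ∀ t : ℝ, 0 < t → α t = c₂ * t ^ (c₁ - 1)) := by
  have hqinv : ContinuousOn (fun v => (q v)⁻¹) (Ici 0) :=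
    hqc.inv₀ fun v hv => (hqpos v hv).ne'
  have hA' : ∀ t, 0 ≤ t → HasDerivWithinAt A (α t) (Ici 0) t := by
    intro t ht
    exact (ftc_Ici hαc ht).congr (fun u _ => hA u) (hA t)
  have hQ' : ∀ u, 0 ≤ u → HasDerivWithinAt Q (q u)⁻¹ (Ici 0) u := by
    intro u hu
    exact (ftc_Ici hqinv hu).congr (fun v _ => hQ v) (hQ u)
  have hQmono : StrictMonoOn Q (Ici 0) := by
    have := strictMono_integral hqinv (fun v hv => inv_pos.2 (hqpos v hv))
    intro a ha b hb hab
    rw [hQ a, hQ b]; exact this ha hb hab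
  have hAmono : StrictMonoOn A (Ici 0) := by
    have := strictMono_integral hαc hαpos
    intro a ha b hb hab
    rw [hA a, hA b]; exact this ha hb hab
  have hA0 : A 0 = 0 := by rw [hA]; exact intervalIntegral.integral_same
  have hQ0 : Q 0 = 0 := by rw [hQ]; exact intervalIntegral.integral_same
  -- nonnegativity of solutions
  have hnn : ∀ x t, 0 ≤ t → 0 ≤ Λ x t := by
    intro x t ht
    by_contra hneg
    push_neg at hneg
    have ht0 : 0 < t := by
      rcases eq_or_lt_of_le ht with rfl | h
      · rw [hΛ0] at hneg; exact absurd hneg (lt_irrefl 0)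
      · exact h
    set K := Icc 0 t ∩ (Λ x) ⁻¹' (Ici 0) with hK
    have hΛc : ContinuousOn (Λ x) (Ici 0) := fun u hu => (hΛ x u hu).continuousWithinAt
    have hKc : IsClosed K :=
      ContinuousOn.preimage_isClosed_of_isClosed
        (hΛc.mono (Icc_subset_Ici_self)) isClosed_Icc isClosed_Ici
    have hKne : K.Nonempty := ⟨0, ⟨le_rfl, ht⟩, by simp [hΛ0]⟩
    have hKcomp : IsCompact K := isCompact_Icc.of_isClosed_subset hKc inter_subset_left
    set t₀ := sSup K with ht₀def
    have ht₀K : t₀ ∈ K := hKcomp.sSup_mem hKne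
    have ht₀0 : 0 ≤ t₀ := ht₀K.1.1
    have ht₀pos : (0:ℝ) ≤ Λ x t₀ := ht₀K.2
    have ht₀t : t₀ < t := by
      rcases lt_or_eq_of_le ht₀K.1.2 with h | h
      · exact h
      · exfalso; rw [h] at ht₀pos; exact absurd hneg (not_lt.2 ht₀pos)
    have hbdd : BddAbove K := hKcomp.bddAbove
    have hneg_on : ∀ u, t₀ < u → u ≤ t → Λ x u < 0 := by
      intro u h1 h2
      by_contra hge
      push_neg at hge
      have hu : u ∈ K := ⟨⟨le_trans ht₀0 h1.le, h2⟩, hge⟩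
      exact absurd (le_csSup hbdd hu) (not_le.2 h1)
    have hΛt₀ : Λ x t₀ = 0 := by
      refine le_antisymm ?_ ht₀pos
      have htend : Tendsto (Λ x) (𝓝[>] t₀) (𝓝 (Λ x t₀)) :=
        ((hΛ x t₀ ht₀0).continuousWithinAt).mono (fun u hu => le_trans ht₀0 (le_of_lt hu))
      refine le_of_tendsto htend ?_
      filter_upwards [Ioo_mem_nhdsGT_of_mem ⟨le_refl t₀, ht₀t⟩] with u hu
      exact (hneg_on u hu.1 hu.2.le).le
    have hD : 0 < q (Λ x t₀) * Real.exp (∑ i, x i * β i) * α t₀ := by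
      rw [hΛt₀]
      exact mul_pos (mul_pos (hqpos 0 le_rfl) (Real.exp_pos _)) (hαpos t₀ ht₀0)
    have hd := hΛ x t₀ ht₀0
    rw [hasDerivWithinAt_iff_tendsto_slope] at hd
    have hd' : Tendsto (slope (Λ x) t₀) (𝓝[>] t₀)
        (𝓝 (q (Λ x t₀) * Real.exp (∑ i, x i * β i) * α t₀)) :=
      hd.mono_left (nhdsWithin_mono _ (fun u hu =>
        ⟨le_trans ht₀0 (le_of_lt hu), by simpa using (ne_of_gt hu)⟩))
    have hev2 : ∀ᶠ u in 𝓝[>] t₀, 0 < slope (Λ x) t₀ u := hd'.eventually (eventually_gt_nhds hD)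
    have hev3 : ∀ᶠ u in 𝓝[>] t₀, u ∈ Ioo t₀ t := Ioo_mem_nhdsGT_of_mem ⟨le_refl t₀, ht₀t⟩
    obtain ⟨u, hu1, hu2⟩ := (hev2.and hev3).exists
    rw [slope_def_field, hΛt₀, sub_zero] at hu1
    have hupos : 0 < u - t₀ := sub_pos.2 hu2.1
    have h5 := mul_pos hu1 hupos
    rw [div_mul_cancel₀ _ (ne_of_gt hupos)] at h5
    exact absurd h5 (not_lt.2 (hneg_on u hu2.1 hu2.2.le).le)
  -- the key identity
  have star : ∀ (x : Fin d → ℝ) (t : ℝ), 0 ≤ t →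
      Q (Λ x t) = Real.exp (∑ i, x i * β i) * A t := by
    intro x t ht
    set s := Real.exp (∑ i, x i * β i) with hs
    set h : ℝ → ℝ := fun u => Q (Λ x u) - s * A u with hh
    have hd : ∀ u ∈ Ici (0:ℝ), HasDerivWithinAt h 0 (Ici 0) u := by
      intro u hu
      rw [mem_Ici] at hu
      have h1 : HasDerivWithinAt (Q ∘ Λ x) ((q (Λ x u))⁻¹ * (q (Λ x u) * s * α u)) (Ici 0) u :=
        HasDerivWithinAt.comp u (hQ' _ (hnn x u hu)) (hΛ x u hu) (fun v hv => hnn x v hv)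
      have h2 := h1.sub ((hA' u hu).const_mul s)
      have h3 : (q (Λ x u))⁻¹ * (q (Λ x u) * s * α u) - s * α u = 0 := by
        field_simp [(hqpos _ (hnn x u hu)).ne']
        ring
      rw [h3] at h2
      exact h2
    have hconst : h t = h 0 :=
      (convex_Ici 0).is_const_of_fderivWithin_eq_zero
        (fun u hu => (hd u hu).differentiableWithinAt)
        (fun u hu => by
          rw [(hd u hu).hasFDerivWithinAt.fderivWithin (uniqueDiffOn_Ici 0 u hu)]
          ext v
          simp) ht self_mem_Ici
    have : h 0 = 0 := by simp [hh, hΛ0, hQ0, hA0]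
    have h4 : h t = 0 := by rw [hconst, this]
    rw [hh] at h4
    simp only at h4
    linarith
  constructor
  · -- AFT implies power form of α
    rintro ⟨βt, Λb, hmonoB, hb0, hbnn, hAFT⟩
    have hQb : ∀ u, 0 ≤ u → Q (Λb u) = A u := by
      intro u hu
      have h1 := star 0 u hu
      have h2 := hAFT 0 u hu
      simp only [Pi.zero_apply, zero_mul, Finset.sum_const_zero, Real.exp_zero, mul_one,
        one_mul] at h1 h2
      rw [← h2]; exact h1
    have hfe : ∀ (x : Fin d → ℝ) (t : ℝ), 0 ≤ t →
        A (t * Real.exp (∑ i, x i * βt i)) = Real.exp (∑ i, x i * β i) * A t := by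
      intro x t ht
      have h1 := star x t ht
      rw [hAFT x t ht, hQb _ (mul_nonneg ht (Real.exp_pos _).le)] at h1
      exact h1
    have hA1 : 0 < A 1 := by
      have := hAmono self_mem_Ici (mem_Ici.2 zero_le_one) zero_lt_one
      rwa [hA0] at this
    have hβt : βt ≠ 0 := by
      rintro rfl
      obtain ⟨i, hi⟩ := hβ
      have h1 := hfe (Pi.single i 1) 1 zero_le_one
      simp only [Pi.zero_apply, mul_zero, Finset.sum_const_zero, Real.exp_zero, mul_one,
        one_mul] at h1
      have h2 : (∑ j, (Pi.single i (1:ℝ) : Fin d → ℝ) j * β j) = β i := by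
        rw [Finset.sum_eq_single i]
        · simp
        · intro j _ hj; simp [Pi.single_apply, hj]
        · intro hno; exact absurd (Finset.mem_univ i) hno
      rw [h2] at h1
      have h3 : Real.exp (β i) = 1 := by
        have := h1
        nlinarith [hA1]
      exact hi ((Real.exp_eq_one_iff _).mp h3)
    set N := ∑ i, βt i * βt i with hN
    have hNpos : 0 < N := by
      obtain ⟨i, hi⟩ : ∃ i, βt i ≠ 0 := by
        by_contra hcon
        push_neg at hcon
        exact hβt (funext hcon)
      exact Finset.sum_pos' (fun j _ => mul_self_nonneg _)
        ⟨i, Finset.mem_univ i, mul_self_pos.2 hi⟩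
    set c₁ := (∑ i, βt i * β i) / N with hc₁def
    have hkey : ∀ s : ℝ, A (Real.exp s) = Real.exp (c₁ * s) * A 1 := by
      intro s
      have h1 := hfe (fun i => s * βt i / N) 1 zero_le_one
      have e1 : (∑ i, (s * βt i / N) * βt i) = s := by
        have : ∀ i ∈ Finset.univ, (s * βt i / N) * βt i = s / N * (βt i * βt i) := by
          intro i _; ring
        rw [Finset.sum_congr rfl this, ← Finset.mul_sum, ← hN, div_mul_cancel₀ _ hNpos.ne']
      have e2 : (∑ i, (s * βt i / N) * β i) = c₁ * s := by
        have : ∀ i ∈ Finset.univ, (s * βt i / N) * β i = s / N * (βt i * β i) := by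
          intro i _; ring
        rw [Finset.sum_congr rfl this, ← Finset.mul_sum, hc₁def]
        ring
      rw [e1, e2, one_mul] at h1
      exact h1
    have hc₁ : 0 < c₁ := by
      have h1 := hkey 1
      have h2 : A 1 < A (Real.exp 1) := by
        refine hAmono (mem_Ici.2 zero_le_one) (mem_Ici.2 (Real.exp_pos 1).le) ?_
        linarith [Real.add_one_le_exp 1]
      have h3 : 1 < Real.exp (c₁ * 1) := by nlinarith
      have h4 := Real.one_lt_exp_iff.mp h3
      linarith
    have hpow : ∀ u : ℝ, 0 < u → A u = A 1 * u ^ c₁ := by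
      intro u hu
      have h1 := hkey (Real.log u)
      rw [Real.exp_log hu] at h1
      rw [h1, Real.rpow_def_of_pos hu, mul_comm (Real.log u) c₁]
      ring
    refine ⟨c₁, hc₁, A 1 * c₁, by positivity, ?_⟩
    intro t htpos
    have hd1 : HasDerivAt A (α t) t := (hA' t htpos.le).hasDerivAt (Ici_mem_nhds htpos)
    have hd2 : HasDerivAt (fun u : ℝ => A 1 * u ^ c₁) (A 1 * (c₁ * t ^ (c₁ - 1))) t :=
      (Real.hasDerivAt_rpow_const (Or.inl htpos.ne')).const_mul (A 1)
    have heq : A =ᶠ[nhds t] fun u : ℝ => A 1 * u ^ c₁ := by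
      filter_upwards [Ioi_mem_nhds htpos] with u hu
      exact hpow u hu
    have hd2' : HasDerivAt A (A 1 * (c₁ * t ^ (c₁ - 1))) t := hd2.congr_of_eventuallyEq heq
    have := hd1.unique hd2'
    rw [this]; ring
  · -- power form of α implies AFT
    rintro ⟨c₁, hc₁, c₂, hc₂, hα⟩
    have hQ0x : ∀ u, 0 ≤ u → Q (Λ 0 u) = A u := by
      intro u hu
      have h1 := star 0 u hu
      simpa using h1
    have hΛ0mono : StrictMonoOn (Λ 0) (Ici 0) := by
      intro u hu v hv huv
      rw [mem_Ici] at hu hv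
      by_contra hle
      push_neg at hle
      have h1 : Q (Λ 0 v) ≤ Q (Λ 0 u) :=
        hQmono.monotoneOn (mem_Ici.2 (hnn 0 v hv)) (mem_Ici.2 (hnn 0 u hu)) hle
      have h2 : A u < A v := hAmono (mem_Ici.2 hu) (mem_Ici.2 hv) huv
      rw [hQ0x u hu, hQ0x v hv] at h1
      linarith
    have hAt : ∀ t : ℝ, 0 ≤ t → A t = c₂ / c₁ * t ^ c₁ := by
      intro t ht
      rw [hA]
      have hcongr : (∫ s in (0:ℝ)..t, α s) = ∫ s in (0:ℝ)..t, c₂ * s ^ (c₁ - 1) := by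
        apply intervalIntegral.integral_congr_ae
        apply ae_of_all
        intro s hs
        rw [uIoc_of_le ht] at hs
        exact hα s hs.1
      rw [hcongr, intervalIntegral.integral_const_mul, integral_rpow (Or.inl (by linarith))]
      rw [sub_add_cancel, Real.zero_rpow hc₁.ne']
      ring
    refine ⟨fun i => β i / c₁, Λ 0, hΛ0mono, hΛ0 0, fun u hu => hnn 0 u hu, ?_⟩
    intro x t ht
    set s := ∑ i, x i * β i with hs
    have hsum : (∑ i, x i * (β i / c₁)) = s / c₁ := by
      rw [hs, Finset.sum_div]
      apply Finset.sum_congr rfl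
      intro i _; ring
    rw [hsum]
    set t' := t * Real.exp (s / c₁) with ht'
    have ht'0 : 0 ≤ t' := mul_nonneg ht (Real.exp_pos _).le
    have hAeq : A t' = Real.exp s * A t := by
      rw [hAt t' ht'0, hAt t ht, ht']
      rw [Real.mul_rpow ht (Real.exp_pos _).le, ← Real.exp_mul, div_mul_cancel₀ _ hc₁.ne']
      ring
    have hQeq : Q (Λ x t) = Q (Λ 0 t') := by
      rw [star x t ht, hQ0x t' ht'0, hAeq, hs]
    exact hQmono.injOn (mem_Ici.2 (hnn x t ht)) (mem_Ici.2 (hnn 0 t' ht'0)) hQeq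
end

section
/- Let (q, β, α) be a parameter triple of the transformation ODE model and let x ∈ ℝ^d. Then the conditional survival function satisfies exp(−Λ_x(t)) = G_q(exp(⟨x, β⟩)·A(t)) for every t ≥ 0, where G_q is the inverse of the function H_q(u) = ∫₀^{−log u} q(v)⁻¹ dv defined for u ∈ (0,1]. -/
open Real MeasureTheory Filter Set Topology

/-- The conditional survival function of the transformation ODE model satisfies
`exp(−Λ_x(t)) = G_q(exp(⟨x,β⟩) · A(t))`, where `G_q` is the inverse of
`H_q(u) = ∫₀^{−log u} q(v)⁻¹ dv` on `(0,1]`. -/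
theorem stmt_5
    (d : ℕ) (hd : 1 ≤ d)
    (q α : ℝ → ℝ) (β : Fin d → ℝ)
    (hqc : ContinuousOn q (Ici 0)) (hqpos : ∀ u, 0 ≤ u → 0 < q u)
    (hαc : ContinuousOn α (Ici 0)) (hαpos : ∀ t, 0 ≤ t → 0 < α t)
    (A Q : ℝ → ℝ)
    (hA : ∀ t, A t = ∫ s in (0:ℝ)..t, α s)
    (hQ : ∀ u, Q u = ∫ v in (0:ℝ)..u, (q v)⁻¹)
    (hQtop : Tendsto Q atTop atTop)
    -- H_q and its inverse G_q
    (H G : ℝ → ℝ)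
    (hH : ∀ u ∈ Ioc (0:ℝ) 1, H u = ∫ v in (0:ℝ)..(-Real.log u), (q v)⁻¹)
    (hGmem : ∀ s, 0 ≤ s → G s ∈ Ioc (0:ℝ) 1)
    (hHG : ∀ s, 0 ≤ s → H (G s) = s)
    (hGH : ∀ u ∈ Ioc (0:ℝ) 1, G (H u) = u)
    (x : Fin d → ℝ)
    -- Λ is the solution of the initial value problem at covariate x
    (Λ : ℝ → ℝ)
    (hΛ0 : Λ 0 = 0)
    (hΛ : ∀ t, 0 ≤ t → HasDerivWithinAt Λ
      (q (Λ t) * Real.exp (∑ i, x i * β i) * α t) (Ici 0) t) :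
    ∀ t, 0 ≤ t →
      Real.exp (-(Λ t)) = G (Real.exp (∑ i, x i * β i) * A t) := by
  set c := Real.exp (∑ i, x i * β i) with hc
  have hcpos : 0 < c := Real.exp_pos _
  -- extend q and α continuously to all of ℝ
  set qt : ℝ → ℝ := fun v => q (max v 0) with hqt
  set αt : ℝ → ℝ := fun s => α (max s 0) with hαt
  have hqtc : Continuous qt :=
    hqc.comp_continuous (continuous_id.max continuous_const) fun v => le_max_right v 0
  have hαtc : Continuous αt :=
    hαc.comp_continuous (continuous_id.max continuous_const) fun v => le_max_right v 0
  have hqtpos : ∀ v, 0 < qt v := fun v => hqpos _ (le_max_right v 0)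
  have hqinv : Continuous fun v => (qt v)⁻¹ := hqtc.inv₀ fun v => (hqtpos v).ne'
  set Qt : ℝ → ℝ := fun u => ∫ v in (0:ℝ)..u, (qt v)⁻¹ with hQtdef
  set At : ℝ → ℝ := fun u => ∫ v in (0:ℝ)..u, αt v with hAtdef
  have hQt' : ∀ u, HasDerivAt Qt (qt u)⁻¹ u := fun u =>
    (hqinv.integral_hasStrictDerivAt 0 u).hasDerivAt
  have hAt' : ∀ u, HasDerivAt At (αt u) u := fun u =>
    (hαtc.integral_hasStrictDerivAt 0 u).hasDerivAt
  have hΛcont : ContinuousOn Λ (Ici 0) := fun t ht => (hΛ t ht).continuousWithinAt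
  -- Λ is nonnegative on [0, ∞)
  have hΛnn : ∀ t, 0 ≤ t → 0 ≤ Λ t := by
    intro t ht
    by_contra hneg
    push_neg at hneg
    have ht0 : (0:ℝ) < t := by
      rcases eq_or_lt_of_le ht with h | h
      · rw [← h, hΛ0] at hneg; linarith
      · exact h
    have hKclosed : IsClosed (Icc 0 t ∩ Λ ⁻¹' {0}) :=
      (hΛcont.mono Icc_subset_Ici_self).preimage_isClosed_of_isClosed isClosed_Icc
        isClosed_singleton
    have hKcomp : IsCompact (Icc 0 t ∩ Λ ⁻¹' {0}) :=
      isCompact_Icc.of_isClosed_subset hKclosed inter_subset_left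
    have hKne : (Icc 0 t ∩ Λ ⁻¹' {0}).Nonempty := ⟨0, ⟨le_refl 0, ht⟩, by simp [hΛ0]⟩
    obtain ⟨t₁, ⟨⟨ht₁0, ht₁t⟩, ht₁z'⟩, ht₁ub⟩ :
        ∃ t₁ ∈ Icc 0 t ∩ Λ ⁻¹' {0}, ∀ z ∈ Icc 0 t ∩ Λ ⁻¹' {0}, z ≤ t₁ :=
      ⟨sSup _, hKcomp.sSup_mem hKne, fun z hz => le_csSup hKcomp.bddAbove hz⟩
    have ht₁z : Λ t₁ = 0 := ht₁z' 
    have ht₁lt : t₁ < t := lt_of_le_of_ne ht₁t (by rintro rfl; rw [ht₁z] at hneg; linarith)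
    -- Λ is negative on (t₁, t]
    have hnegOn : ∀ s ∈ Ioc t₁ t, Λ s < 0 := by
      intro s hs
      by_contra hsn
      push_neg at hsn
      rcases hsn.lt_or_eq with hpos | hz
      · -- IVT gives a zero in [s, t], above t₁
        have hcont : ContinuousOn Λ (Icc s t) :=
          hΛcont.mono fun z hz => le_trans (le_trans ht₁0 hs.1.le) hz.1
        have hIVT := intermediate_value_Icc' hs.2 hcont
        have h0mem : (0:ℝ) ∈ Icc (Λ t) (Λ s) := ⟨hneg.le, hpos.le⟩
        obtain ⟨z, hzmem, hzval⟩ := hIVT h0mem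
        have hzK : z ∈ Icc 0 t ∩ Λ ⁻¹' {0} :=
          ⟨⟨le_trans (le_trans ht₁0 hs.1.le) hzmem.1, hzmem.2⟩, hzval⟩
        have : z ≤ t₁ := ht₁ub z hzK
        linarith [hs.1, hzmem.1]
      · have hsK : s ∈ Icc 0 t ∩ Λ ⁻¹' {0} := ⟨⟨le_trans ht₁0 hs.1.le, hs.2⟩, hz.symm⟩
        have : s ≤ t₁ := ht₁ub s hsK
        linarith [hs.1]
    -- derivative at t₁ is positive, contradiction
    have hD : HasDerivWithinAt Λ (q (Λ t₁) * c * α t₁) (Ici 0) t₁ := hΛ t₁ ht₁0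
    have hDpos : 0 < q (Λ t₁) * c * α t₁ := by
      rw [ht₁z]
      exact mul_pos (mul_pos (hqpos 0 le_rfl) hcpos) (hαpos t₁ ht₁0)
    have hslope := hasDerivWithinAt_iff_tendsto_slope.mp hD
    have hsub : Ioi t₁ ⊆ Ici (0:ℝ) \ {t₁} := fun s hs =>
      ⟨le_trans ht₁0 (le_of_lt hs), ne_of_gt hs⟩
    have hslope' : Tendsto (slope Λ t₁) (𝓝[>] t₁) (𝓝 (q (Λ t₁) * c * α t₁)) :=
      hslope.mono_left (nhdsWithin_mono _ hsub)
    have hev1 : ∀ᶠ s in 𝓝[>] t₁, 0 < slope Λ t₁ s :=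
      hslope' (Ioi_mem_nhds hDpos)
    have hev2 : ∀ᶠ s in 𝓝[>] t₁, s ∈ Ioc t₁ t := Ioc_mem_nhdsGT_of_mem ⟨le_refl _, ht₁lt⟩
    obtain ⟨s, hs1, hs2⟩ := (hev1.and hev2).exists
    have : slope Λ t₁ s < 0 := by
      rw [slope_def_field, ht₁z, sub_zero]
      exact div_neg_of_neg_of_pos (hnegOn s hs2) (by linarith [hs2.1])
    linarith
  -- Main ODE identity: Qt (Λ s) = c * At s for s ≥ 0
  have hQtcont : Continuous Qt := by
    have : Differentiable ℝ Qt := fun u => (hQt' u).differentiableAt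
    exact this.continuous
  have hAtcont : Continuous At := by
    have : Differentiable ℝ At := fun u => (hAt' u).differentiableAt
    exact this.continuous
  have hkey : ∀ t, 0 ≤ t → Qt (Λ t) = c * At t := by
    intro t ht
    have main := eq_of_has_deriv_right_eq (f := fun s => Qt (Λ s)) (g := fun s => c * At s)
      (f' := fun s => c * αt s) (a := 0) (b := t)
      (fun s hs => by
        have hs0 : (0:ℝ) ≤ s := hs.1
        have hΛs : HasDerivWithinAt Λ (q (Λ s) * c * α s) (Ici s) s :=
          (hΛ s hs0).mono (Ici_subset_Ici.mpr hs0)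
        have hcomp := (hQt' (Λ s)).comp_hasDerivWithinAt s hΛs
        have heq : (qt (Λ s))⁻¹ * (q (Λ s) * c * α s) = c * αt s := by
          have h1 : qt (Λ s) = q (Λ s) := by
            simp only [hqt, max_eq_left (hΛnn s hs0)]
          have h2 : αt s = α s := by simp only [hαt, max_eq_left hs0]
          rw [h1, h2]
          field_simp [(hqpos _ (hΛnn s hs0)).ne']
        rw [heq] at hcomp
        exact hcomp)
      (fun s hs => by
        exact ((hAt' s).const_mul c).hasDerivWithinAt)
      (hQtcont.comp_continuousOn (hΛcont.mono Icc_subset_Ici_self))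
      ((continuous_const.mul hAtcont).continuousOn)
      (by simp [hΛ0, hQtdef, hAtdef])
    exact main t ⟨ht, le_rfl⟩
  -- conclude
  intro t ht
  have hΛt : 0 ≤ Λ t := hΛnn t ht
  have hmem : Real.exp (-(Λ t)) ∈ Ioc (0:ℝ) 1 := by
    constructor
    · exact Real.exp_pos _
    · exact Real.exp_le_one_iff.mpr (by linarith)
  have hHval : H (Real.exp (-(Λ t))) = c * A t := by
    rw [hH _ hmem, Real.log_exp, neg_neg]
    have hint : (∫ v in (0:ℝ)..(Λ t), (q v)⁻¹) = Qt (Λ t) := by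
      refine intervalIntegral.integral_congr fun v hv => ?_
      rw [uIcc_of_le hΛt] at hv
      simp only [hqt, max_eq_left hv.1]
    have hAint : A t = At t := by
      rw [hA]
      refine intervalIntegral.integral_congr fun v hv => ?_
      rw [uIcc_of_le ht] at hv
      simp only [hαt, max_eq_left hv.1]
    rw [hint, hkey t ht, hAint]
  rw [← hHval, hGH _ hmem]
end

section
/- Let T_x be a nonnegative random variable whose survival function is P(T_x > t) = exp(−Λ_x(t)), where Λ_x is the solution of the transformation ODE model at covariate x ∈ ℝ^d, and define the transformation φ(t) = log A(t) for t > 0. Then for every s ∈ ℝ, P(φ(T_x) > s) = G_q(exp(s + ⟨x, β⟩)); equivalently, the distribution of exp(φ(T_x) + ⟨x, β⟩) has survival function G_q and does not depend on x, so that φ(T_x) = −⟨x, β⟩ + ε with δ = exp(ε) having survival function G_q. -/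
/-!
Separating variables in `Λ' = q(Λ) e^{⟨x,β⟩} α` gives `∫₀^{Λ(t)} 1/q = e^{⟨x,β⟩} A(t)`, that is
`H_q(e^{-Λ(t)}) = e^{⟨x,β⟩} A(t)`. As `A` increases from `0` to `∞`, for each `s` there is `t_s`
with `A(t_s) = e^s`, and `log A(T) > s` iff `T > t_s`. Hence
`P(log A(T) > s) = e^{-Λ(t_s)} = G_q(e^{s + ⟨x,β⟩})`.
-/

open Real MeasureTheory Filter Set intervalIntegral Topology

section Calculus

variable {f : ℝ → ℝ} {a : ℝ}

theorem hasDerivWithinAt_integral_Ici (hf : ContinuousOn f (Ici a)) {b : ℝ} (hb : a ≤ b) :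
    HasDerivWithinAt (fun u => ∫ s in a..u, f s) (f b) (Ici a) b := by
  have hint : IntervalIntegrable f volume a b :=
    (hf.mono (uIcc_of_le hb ▸ Icc_subset_Ici_self)).intervalIntegrable
  rcases hb.eq_or_lt with rfl | hb
  · exact integral_hasDerivWithinAt_right hint
      ((hf.mono Ioi_subset_Ici_self).stronglyMeasurableAtFilter_nhdsWithin measurableSet_Ioi a)
      ((hf a self_mem_Ici).mono Ioi_subset_Ici_self)
  · exact (integral_hasDerivAt_right hint
      ((hf.mono Ioi_subset_Ici_self).stronglyMeasurableAtFilter isOpen_Ioi b hb)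
      (hf.continuousAt (Ici_mem_nhds hb))).hasDerivWithinAt

theorem strictMonoOn_integral_Ici (hf : ContinuousOn f (Ici a)) (hpos : ∀ t, a ≤ t → 0 < f t) :
    StrictMonoOn (fun u => ∫ s in a..u, f s) (Ici a) := by
  intro u hu v hv huv
  have hint : ∀ w ∈ Ici a, IntervalIntegrable f volume a w := fun w (hw : a ≤ w) =>
    (hf.mono (uIcc_of_le hw ▸ Icc_subset_Ici_self)).intervalIntegrable
  have hpos_uv : 0 < ∫ s in u..v, f s :=
    intervalIntegral_pos_of_pos_on ((hint u hu).symm.trans (hint v hv))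
      (fun t ht => hpos t (hu.trans ht.1.le)) huv
  show ∫ s in a..u, f s < ∫ s in a..v, f s
  linarith [integral_add_adjacent_intervals (hint u hu) ((hint u hu).symm.trans (hint v hv))]

/-- Separation of variables: both sides vanish at `0` and have right derivative `E α t`. -/
theorem integral_inv_comp_eq_of_hasDerivWithinAt {q α Λ : ℝ → ℝ} {E : ℝ}
    (hqc : ContinuousOn q (Ici 0)) (hq : ∀ u, 0 ≤ u → q u ≠ 0) (hαc : ContinuousOn α (Ici 0))
    (hΛ0 : Λ 0 = 0) (hΛnn : ∀ t, 0 ≤ t → 0 ≤ Λ t)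
    (hΛ : ∀ t, 0 ≤ t → HasDerivWithinAt Λ (q (Λ t) * E * α t) (Ici 0) t) {t : ℝ} (ht : 0 ≤ t) :
    ∫ v in (0:ℝ)..Λ t, (q v)⁻¹ = E * ∫ s in (0:ℝ)..t, α s := by
  have hlhs : ∀ t, 0 ≤ t →
      HasDerivWithinAt (fun t => ∫ v in (0:ℝ)..Λ t, (q v)⁻¹) (E * α t) (Ici 0) t := by
    intro t ht
    refine ((hasDerivWithinAt_integral_Ici (f := fun v => (q v)⁻¹) (hqc.inv₀ hq)
      (hΛnn t ht)).comp t (hΛ t ht) (fun s hs => hΛnn s hs)).congr_deriv ?_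
    field_simp [hq _ (hΛnn t ht)]
  have hrhs : ∀ t, 0 ≤ t →
      HasDerivWithinAt (fun t => E * ∫ s in (0:ℝ)..t, α s) (E * α t) (Ici 0) t :=
    fun t ht => (hasDerivWithinAt_integral_Ici hαc ht).const_mul E
  refine eq_of_has_deriv_right_eq
    (fun s hs => (hlhs s hs.1).mono (Ici_subset_Ici.mpr hs.1))
    (fun s hs => (hrhs s hs.1).mono (Ici_subset_Ici.mpr hs.1))
    (fun s hs => (hlhs s hs.1).continuousWithinAt.mono Icc_subset_Ici_self)
    (fun s hs => (hrhs s hs.1).continuousWithinAt.mono Icc_subset_Ici_self)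
    (by simp [hΛ0]) t ⟨ht, le_rfl⟩

end Calculus

theorem apply_integral_inv_eq_exp_neg {q H G : ℝ → ℝ}
    (hH : ∀ u ∈ Ioc (0:ℝ) 1, H u = ∫ v in (0:ℝ)..(-Real.log u), (q v)⁻¹)
    (hGH : ∀ u ∈ Ioc (0:ℝ) 1, G (H u) = u) {u : ℝ} (hu : 0 ≤ u) :
    G (∫ v in (0:ℝ)..u, (q v)⁻¹) = exp (-u) := by
  have hmem : exp (-u) ∈ Ioc (0:ℝ) 1 := ⟨exp_pos _, exp_le_one_iff.mpr (neg_nonpos.mpr hu)⟩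
  rw [← hGH _ hmem, hH _ hmem, log_exp, neg_neg]

section Probability

variable {Ω : Type*} [MeasurableSpace Ω] {μ : Measure Ω}

/-- `log (A (T ω))` is a junk value where `T ω ≤ 0`, hence only an a.e. equality. -/
theorem setOf_lt_log_comp_ae_eq {T : Ω → ℝ} {A : ℝ → ℝ} (hA : StrictMonoOn A (Ici 0))
    (hA0 : A 0 = 0) (hT : ∀ᵐ ω ∂μ, 0 < T ω) {s t : ℝ} (ht : 0 ≤ t) (hAt : A t = exp s) :
    {ω | s < log (A (T ω))} =ᵐ[μ] {ω | t < T ω} := by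
  filter_upwards [hT] with ω hω
  have hAT : 0 < A (T ω) := hA0 ▸ hA self_mem_Ici (le_of_lt hω) hω
  change (s < log (A (T ω))) = (t < T ω)
  rw [eq_iff_iff, lt_log_iff_exp_lt hAT, ← hAt]
  exact hA.lt_iff_lt ht (le_of_lt hω)

variable [IsProbabilityMeasure μ]

theorem nonneg_of_measure_eq_ofReal_exp_neg {s : Set Ω} {a : ℝ}
    (h : μ s = ENNReal.ofReal (exp (-a))) : 0 ≤ a := by
  have : exp (-a) ≤ 1 := ENNReal.ofReal_le_one.mp (h ▸ prob_le_one)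
  linarith [exp_le_one_iff.mp this]

theorem ae_lt_of_measure_lt_eq_one {T : Ω → ℝ} (hT : Measurable T) {t : ℝ}
    (h : μ {ω | t < T ω} = 1) : ∀ᵐ ω ∂μ, t < T ω :=
  (ae_iff_measure_eq (measurableSet_lt measurable_const hT).nullMeasurableSet).mpr
    (by rw [h, measure_univ])

end Probability

theorem stmt_8_general
    (d : ℕ)
    (q α : ℝ → ℝ) (β : Fin d → ℝ)
    (hqc : ContinuousOn q (Ici 0)) (hqpos : ∀ u, 0 ≤ u → 0 < q u)
    (hαc : ContinuousOn α (Ici 0)) (hαpos : ∀ t, 0 ≤ t → 0 < α t)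
    (A : ℝ → ℝ)
    (hA : ∀ t, A t = ∫ s in (0:ℝ)..t, α s)
    (hAtop : Tendsto A atTop atTop)
    -- H_q and its inverse G_q
    (H G : ℝ → ℝ)
    (hH : ∀ u ∈ Ioc (0:ℝ) 1, H u = ∫ v in (0:ℝ)..(-Real.log u), (q v)⁻¹)
    (hGH : ∀ u ∈ Ioc (0:ℝ) 1, G (H u) = u)
    (x : Fin d → ℝ)
    -- Λ is the solution of the initial value problem at covariate x
    (Λ : ℝ → ℝ)
    (hΛ0 : Λ 0 = 0)
    (hΛ : ∀ t, 0 ≤ t → HasDerivWithinAt Λ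
      (q (Λ t) * Real.exp (∑ i, x i * β i) * α t) (Ici 0) t)
    -- T is a nonnegative random variable with survival function exp(−Λ(·))
    (Ω : Type*) [MeasurableSpace Ω] (μ : Measure Ω) [IsProbabilityMeasure μ]
    (T : Ω → ℝ)
    (hTm : Measurable T)
    (hTsurv : ∀ t, 0 ≤ t → μ {ω | t < T ω} = ENNReal.ofReal (Real.exp (-(Λ t)))) :
    (∀ s : ℝ,
        μ {ω | s < Real.log (A (T ω))} =
          ENNReal.ofReal (G (Real.exp (s + ∑ i, x i * β i)))) ∧
      (∀ s : ℝ, 0 ≤ s →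
        μ {ω | s < Real.exp (Real.log (A (T ω)) + ∑ i, x i * β i)} =
          ENNReal.ofReal (G s)) := by
  set c := ∑ i, x i * β i
  have hA_eq : A = fun t => ∫ s in (0:ℝ)..t, α s := funext hA
  have hΛnn : ∀ t, 0 ≤ t → 0 ≤ Λ t := fun t ht =>
    nonneg_of_measure_eq_ofReal_exp_neg (hTsurv t ht)
  have hT : ∀ᵐ ω ∂μ, 0 < T ω :=
    ae_lt_of_measure_lt_eq_one hTm (by simp [hTsurv 0 le_rfl, hΛ0])
  have hAmono : StrictMonoOn A (Ici 0) :=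
    hA_eq ▸ strictMonoOn_integral_Ici hαc hαpos
  have hA0 : A 0 = 0 := by simp [hA]
  have hAc : ContinuousOn A (Ici 0) := hA_eq ▸ fun t ht =>
    (hasDerivWithinAt_integral_Ici hαc ht).continuousWithinAt
  have hlog : ∀ s, μ {ω | s < log (A (T ω))} = ENNReal.ofReal (G (exp (s + c))) := by
    intro s
    obtain ⟨t, ht, hAt⟩ : exp s ∈ A '' Ici 0 :=
      intermediate_value_Ici hAc hAtop (by rw [hA0]; exact (exp_pos s).le)
    rw [measure_congr (setOf_lt_log_comp_ae_eq hAmono hA0 hT ht hAt), hTsurv t ht,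
      ← apply_integral_inv_eq_exp_neg hH hGH (hΛnn t ht),
      integral_inv_comp_eq_of_hasDerivWithinAt hqc (fun u hu => (hqpos u hu).ne') hαc hΛ0 hΛnn
        hΛ ht, ← hA, hAt, ← exp_add, add_comm]
  refine ⟨hlog, fun s hs => ?_⟩
  rcases hs.eq_or_lt with rfl | hs
  · have hG0 : G 0 = 1 := by simpa using apply_integral_inv_eq_exp_neg hH hGH le_rfl (q := q)
    simp [exp_pos, hG0]
  · have hset : {ω | s < exp (log (A (T ω)) + c)} = {ω | log s - c < log (A (T ω))} := by
      ext ω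
      rw [mem_ofPred_eq, mem_ofPred_eq, ← log_lt_iff_lt_exp hs, sub_lt_iff_lt_add]
    rw [hset, hlog, sub_add_cancel, exp_log hs]

/-- With the transformation `φ(t) = log A(t)`, the random variable `φ(T_x)` satisfies
`P(φ(T_x) > s) = G_q(exp(s + ⟨x,β⟩))` for all `s ∈ ℝ`; equivalently, the distribution of
`exp(φ(T_x) + ⟨x,β⟩)` has survival function `G_q`, which does not depend on `x`. -/
theorem stmt_8
    (d : ℕ) (hd : 1 ≤ d)
    (q α : ℝ → ℝ) (β : Fin d → ℝ)
    (hqc : ContinuousOn q (Ici 0)) (hqpos : ∀ u, 0 ≤ u → 0 < q u)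
    (hαc : ContinuousOn α (Ici 0)) (hαpos : ∀ t, 0 ≤ t → 0 < α t)
    (A Q : ℝ → ℝ)
    (hA : ∀ t, A t = ∫ s in (0:ℝ)..t, α s)
    (hQ : ∀ u, Q u = ∫ v in (0:ℝ)..u, (q v)⁻¹)
    (hQtop : Tendsto Q atTop atTop)
    (hAtop : Tendsto A atTop atTop)
    -- H_q and its inverse G_q
    (H G : ℝ → ℝ)
    (hH : ∀ u ∈ Ioc (0:ℝ) 1, H u = ∫ v in (0:ℝ)..(-Real.log u), (q v)⁻¹)
    (hGmem : ∀ s, 0 ≤ s → G s ∈ Ioc (0:ℝ) 1)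
    (hHG : ∀ s, 0 ≤ s → H (G s) = s)
    (hGH : ∀ u ∈ Ioc (0:ℝ) 1, G (H u) = u)
    (x : Fin d → ℝ)
    -- Λ is the solution of the initial value problem at covariate x
    (Λ : ℝ → ℝ)
    (hΛ0 : Λ 0 = 0)
    (hΛ : ∀ t, 0 ≤ t → HasDerivWithinAt Λ
      (q (Λ t) * Real.exp (∑ i, x i * β i) * α t) (Ici 0) t)
    -- T is a nonnegative random variable with survival function exp(−Λ(·))
    (Ω : Type*) [MeasurableSpace Ω] (μ : Measure Ω) [IsProbabilityMeasure μ]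
    (T : Ω → ℝ)
    (hTm : Measurable T)
    (hTnn : ∀ ω, 0 ≤ T ω)
    (hTsurv : ∀ t, 0 ≤ t → μ {ω | t < T ω} = ENNReal.ofReal (Real.exp (-(Λ t)))) :
    (∀ s : ℝ,
        μ {ω | s < Real.log (A (T ω))} =
          ENNReal.ofReal (G (Real.exp (s + ∑ i, x i * β i)))) ∧
      (∀ s : ℝ, 0 ≤ s →
        μ {ω | s < Real.exp (Real.log (A (T ω)) + ∑ i, x i * β i)} =
          ENNReal.ofReal (G s)) :=
  stmt_8_general d q α β hqc hqpos hαc hαpos A hA hAtop H G hH hGH x Λ hΛ0 hΛ Ω μ T hTm hTsurv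
end

section
/- Let (q, β, α) be a parameter triple of the transformation ODE model in which α(t) = c₂·t^{c₁−1} for all t > 0, for some constants c₁, c₂ > 0. Then A(t) = (c₂/c₁)·t^{c₁}, and for every x ∈ ℝ^d the solution satisfies Λ_x(t) = Λ̄(t·exp(⟨x, β⟩/c₁)) for all t ≥ 0, where Λ̄(u) = Q⁻¹((c₂/c₁)·u^{c₁}) is strictly increasing with Λ̄(0) = 0 and does not depend on x; in particular, the model is of accelerated failure time form with regression coefficient β/c₁. -/
open Real MeasureTheory Filter Set

/-- When `α(t) = c₂ t^{c₁-1}`, one has `A(t) = (c₂/c₁) t^{c₁}` and the model is of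
accelerated failure time form: `Λ_x(t) = Λ̄(t · exp(⟨x,β⟩/c₁))` where
`Λ̄(u) = Q⁻¹((c₂/c₁) u^{c₁})` is strictly increasing, vanishes at `0`, and does not
depend on `x`. -/
theorem stmt_10
    (d : ℕ) (hd : 1 ≤ d)
    (c₁ c₂ : ℝ) (hc₁ : 0 < c₁) (hc₂ : 0 < c₂)
    (q α : ℝ → ℝ) (β : Fin d → ℝ)
    (hqc : ContinuousOn q (Ici 0)) (hqpos : ∀ u, 0 ≤ u → 0 < q u)
    (hαform : ∀ t : ℝ, 0 < t → α t = c₂ * t ^ (c₁ - 1))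
    (A Q : ℝ → ℝ)
    (hA : ∀ t, A t = ∫ s in (0:ℝ)..t, α s)
    (hQ : ∀ u, Q u = ∫ v in (0:ℝ)..u, (q v)⁻¹)
    (hQtop : Tendsto Q atTop atTop)
    -- Qinv is the inverse of the strictly increasing bijection Q : [0,∞) → [0,∞)
    (Qinv : ℝ → ℝ)
    (hQinvl : ∀ u, 0 ≤ u → Qinv (Q u) = u)
    (hQinvr : ∀ s, 0 ≤ s → 0 ≤ Qinv s ∧ Q (Qinv s) = s)
    -- Λ is the solution of the ODE, characterized by Q(Λ_x(t)) = exp(⟨x,β⟩)·A(t)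
    (Λ : (Fin d → ℝ) → ℝ → ℝ)
    (hΛ0 : ∀ x, Λ x 0 = 0)
    (hΛnn : ∀ x, ∀ t, 0 ≤ t → 0 ≤ Λ x t)
    (hchar : ∀ x, ∀ t, 0 ≤ t →
      Q (Λ x t) = Real.exp (∑ i, x i * β i) * A t) :
    (∀ t : ℝ, 0 ≤ t → A t = (c₂ / c₁) * t ^ c₁) ∧
      ∃ Λb : ℝ → ℝ,
        (∀ u, 0 ≤ u → Λb u = Qinv ((c₂ / c₁) * u ^ c₁)) ∧
        StrictMonoOn Λb (Ici 0) ∧ Λb 0 = 0 ∧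
        ∀ (x : Fin d → ℝ) (t : ℝ), 0 ≤ t →
          Λ x t = Λb (t * Real.exp ((∑ i, x i * β i) / c₁)) := by
  have hc₁0 : c₁ ≠ 0 := hc₁.ne'
  -- formula for A
  have hAform : ∀ t : ℝ, 0 ≤ t → A t = (c₂ / c₁) * t ^ c₁ := by
    intro t ht
    rcases ht.eq_or_lt with rfl | ht
    · simp [hA, Real.zero_rpow hc₁0]
    · rw [hA]
      have h1 : (∫ s in (0:ℝ)..t, α s) = ∫ s in (0:ℝ)..t, c₂ * s ^ (c₁ - 1) := by
        apply intervalIntegral.integral_congr_ae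
        filter_upwards with s hs
        rw [uIoc_of_le ht.le] at hs
        exact hαform s hs.1
      have h2 : c₁ - 1 + 1 = c₁ := by ring
      rw [h1, intervalIntegral.integral_const_mul,
        integral_rpow (Or.inl (by linarith)), h2,
        Real.zero_rpow hc₁0]
      ring
  -- integrability of q⁻¹
  have hint : ∀ a b : ℝ, 0 ≤ a → a ≤ b →
      IntervalIntegrable (fun v => (q v)⁻¹) MeasureTheory.volume a b := by
    intro a b ha hab
    apply ContinuousOn.intervalIntegrable
    apply ContinuousOn.inv₀
    · exact hqc.mono (by rw [uIcc_of_le hab]; exact fun x hx => le_trans ha hx.1)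
    · intro x hx
      rw [uIcc_of_le hab] at hx
      exact (hqpos x (ha.trans hx.1)).ne'
  -- Q is strictly monotone on [0, ∞)
  have hQmono : StrictMonoOn Q (Ici 0) := by
    intro a ha b hb hab
    have ha' : (0:ℝ) ≤ a := ha
    have hsum : Q a + (∫ v in a..b, (q v)⁻¹) = Q b := by
      rw [hQ, hQ]
      exact intervalIntegral.integral_add_adjacent_intervals
        (hint 0 a le_rfl ha') (hint a b ha' hab.le)
    have hpos : 0 < ∫ v in a..b, (q v)⁻¹ :=
      intervalIntegral.intervalIntegral_pos_of_pos_on (hint a b ha' hab.le)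
        (fun x hx => inv_pos.2 (hqpos x (ha'.trans hx.1.le))) hab
    linarith
  have hQ0 : Q 0 = 0 := by simp [hQ]
  -- Qinv strictly monotone on nonneg arguments
  have hQinvmono : ∀ s s' : ℝ, 0 ≤ s → 0 ≤ s' → s < s' → Qinv s < Qinv s' := by
    intro s s' hs hs' hss
    obtain ⟨h1, h2⟩ := hQinvr s hs
    obtain ⟨h3, h4⟩ := hQinvr s' hs'
    by_contra hle
    push_neg at hle
    have := hQmono.monotoneOn (mem_Ici.2 h3) (mem_Ici.2 h1) hle
    rw [h2, h4] at this
    exact absurd hss (not_lt.2 this)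
  refine ⟨hAform, fun u => Qinv ((c₂ / c₁) * u ^ c₁), fun u _ => rfl, ?_, ?_, ?_⟩
  · intro u hu v hv huv
    have hu' : (0:ℝ) ≤ u := hu
    have hpow : u ^ c₁ < v ^ c₁ := Real.rpow_lt_rpow hu' huv hc₁
    have hcc : 0 < c₂ / c₁ := div_pos hc₂ hc₁
    exact hQinvmono _ _ (mul_nonneg hcc.le (Real.rpow_nonneg hu' _))
      (mul_nonneg hcc.le (Real.rpow_nonneg (hu'.trans huv.le) _))
      (by exact mul_lt_mul_of_pos_left hpow hcc)
  · show Qinv (c₂ / c₁ * (0:ℝ) ^ c₁) = 0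
    rw [Real.zero_rpow hc₁0, mul_zero, ← hQ0, hQinvl 0 le_rfl, hQ0]
  · intro x t ht
    set B := ∑ i, x i * β i with hB
    have hkey : (c₂ / c₁) * (t * Real.exp (B / c₁)) ^ c₁ = Real.exp B * A t := by
      rw [Real.mul_rpow ht (Real.exp_pos _).le, ← Real.exp_mul,
        div_mul_cancel₀ _ hc₁0, hAform t ht]
      ring
    have harg : 0 ≤ t * Real.exp (B / c₁) :=
      mul_nonneg ht (Real.exp_pos _).le
    have : Λ x t = Qinv (Q (Λ x t)) := (hQinvl _ (hΛnn x t ht)).symm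
    show Λ x t = Qinv (c₂ / c₁ * (t * Real.exp (B / c₁)) ^ c₁)
    rw [this, hchar x t ht, ← hkey]
end

section
/- (Adjoint sensitivity analysis.) Let p ≥ 1, let f : ℝ × ℝ × ℝ^p → ℝ be continuously differentiable, fix θ₀ ∈ ℝ^p and y > 0, and suppose that for every θ in a neighborhood of θ₀ there is a unique solution Λ(·; θ) on [0, y] of the initial value problem ∂_t Λ(t; θ) = f(t, Λ(t; θ), θ), Λ(0; θ) = 0. Let κ : [0, y] → ℝ solve the backward linear problem κ'(t) = −κ(t)·∂_Λ f(t, Λ(t; θ₀), θ₀) with terminal condition κ(y) = 1, and let F₂ : [0, y] → ℝ^p solve F₂'(t) = −κ(t)·∂_θ f(t, Λ(t; θ₀), θ₀) with terminal condition F₂(y) = 0. Then the gradient of θ ↦ Λ(y; θ) at θ₀ equals F₂(0), i.e., ∂_θ Λ(y; θ₀) = F₂(0) = ∫₀^y κ(t)·∂_θ f(t, Λ(t; θ₀), θ₀) dt. -/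
/-!
Put `h = θ - θ₀` and `δ = Λ(·; θ) - Λ(·; θ₀)`. Solutions depend Lipschitz-continuously on the
parameter, `|δ| ≤ B‖h‖` on `[0, y]`: Gronwall applies to the field clamped to a box containing the
graph of `Λ(·; θ₀)`, whose solution stays in the box and hence, by uniqueness, is `Λ(·; θ)`.
Together with the uniform first-order Taylor estimate of the `C¹` function `f` near that (compact)
graph this gives `δ' = ∂_Λ f · δ + ⟪∂_θ f, h⟫ + o(‖h‖)` uniformly in `t`. The adjoint equations
are chosen so that `κ δ + ⟪F₂, h⟫` has derivative `κ · o(‖h‖)`; comparing its values `δ(y)` at `y`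
and `⟪F₂(0), h⟫` at `0` yields the gradient. The integral formula is the fundamental theorem of
calculus for `F₂`.
-/

open Real Set

open Metric Filter Topology
open scoped RealInnerProductSpace NNReal

section PartialDerivatives

variable {E : Type*} [NormedAddCommGroup E] [InnerProductSpace ℝ E] [CompleteSpace E]

theorem toDual_eq_fderiv_uncurry_comp_inr {f : ℝ → ℝ → E → ℝ} {t L : ℝ} {θ g : E}
    (hf : DifferentiableAt ℝ (fun w : ℝ × ℝ × E => f w.1 w.2.1 w.2.2) (t, L, θ))
    (hθ : HasGradientAt (fun θ' => f t L θ') g θ) :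
    InnerProductSpace.toDual ℝ E g =
      (fderiv ℝ (fun w : ℝ × ℝ × E => f w.1 w.2.1 w.2.2) (t, L, θ)).comp
        ((ContinuousLinearMap.inr ℝ ℝ (ℝ × E)).comp (ContinuousLinearMap.inr ℝ ℝ E)) := by
  have hslice : HasFDerivAt (fun θ' : E => ((t, L, θ') : ℝ × ℝ × E))
      ((ContinuousLinearMap.inr ℝ ℝ (ℝ × E)).comp (ContinuousLinearMap.inr ℝ ℝ E)) θ := by
    refine ((hasFDerivAt_const t θ).prodMk
      ((hasFDerivAt_const L θ).prodMk (hasFDerivAt_id (𝕜 := ℝ) θ))).congr_fderiv ?_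
    ext v <;> simp
  have h := hf.hasFDerivAt.comp θ hslice
  exact hθ.hasFDerivAt.unique h

theorem fderiv_uncurry_apply_zero {f : ℝ → ℝ → E → ℝ} {t L a : ℝ} {θ g : E}
    (hf : DifferentiableAt ℝ (fun w : ℝ × ℝ × E => f w.1 w.2.1 w.2.2) (t, L, θ))
    (hL : HasDerivAt (fun L' => f t L' θ) a L) (hθ : HasGradientAt (fun θ' => f t L θ') g θ)
    (l : ℝ) (v : E) :
    fderiv ℝ (fun w : ℝ × ℝ × E => f w.1 w.2.1 w.2.2) (t, L, θ) (0, l, v) = l * a + ⟪g, v⟫ := by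
  have hDL : fderiv ℝ (fun w : ℝ × ℝ × E => f w.1 w.2.1 w.2.2) (t, L, θ) (0, 1, 0) = a := by
    have hcurve : HasDerivAt (fun L' : ℝ => ((t, L', θ) : ℝ × ℝ × E)) (0, 1, 0) L :=
      (hasDerivAt_const L t).prodMk ((hasDerivAt_id L).prodMk (hasDerivAt_const L θ))
    have h := hf.hasFDerivAt.comp_hasDerivAt L hcurve
    exact h.unique hL
  have hDθ := congrArg (fun φ : E →L[ℝ] ℝ => φ v) (toDual_eq_fderiv_uncurry_comp_inr hf hθ)
  simp only [InnerProductSpace.toDual_apply_apply, ContinuousLinearMap.comp_apply,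
    ContinuousLinearMap.inr_apply] at hDθ
  have hsplit : ((0 : ℝ), l, v) = l • ((0 : ℝ), (1 : ℝ), (0 : E)) + (0, 0, v) := by
    simp
  rw [hsplit, map_add, map_smul, hDL, ← hDθ, smul_eq_mul]

theorem continuous_uncurry_of_hasGradientAt {f : ℝ → ℝ → E → ℝ}
    (hf : ContDiff ℝ 1 (fun w : ℝ × ℝ × E => f w.1 w.2.1 w.2.2)) {fθ : ℝ → ℝ → E → E}
    (hfθ : ∀ t L θ, HasGradientAt (fun θ' => f t L θ') (fθ t L θ) θ) :
    Continuous fun w : ℝ × ℝ × E => fθ w.1 w.2.1 w.2.2 := by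
  have h : (fun w : ℝ × ℝ × E => fθ w.1 w.2.1 w.2.2) = fun w => (InnerProductSpace.toDual ℝ E).symm
      ((fderiv ℝ (fun w : ℝ × ℝ × E => f w.1 w.2.1 w.2.2) w).comp
        ((ContinuousLinearMap.inr ℝ ℝ (ℝ × E)).comp (ContinuousLinearMap.inr ℝ ℝ E))) := by
    funext w
    rw [← toDual_eq_fderiv_uncurry_comp_inr ((hf.differentiable one_ne_zero) w) (hfθ _ _ _),
      LinearIsometryEquiv.symm_apply_apply]
  rw [h]
  exact (InnerProductSpace.toDual ℝ E).symm.continuous.comp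
    ((hf.continuous_fderiv one_ne_zero).clm_comp continuous_const)

end PartialDerivatives

theorem IsCompact.exists_forall_norm_image_add_sub_sub_fderiv_le {X Y : Type*}
    [NormedAddCommGroup X] [NormedSpace ℝ X] [NormedAddCommGroup Y] [NormedSpace ℝ Y]
    {G : X → Y} (hG : ContDiff ℝ 1 G) {S : Set X} (hS : IsCompact S) {c : ℝ} (hc : 0 < c) :
    ∃ η > 0, ∀ w ∈ S, ∀ v : X, ‖v‖ < η → ‖G (w + v) - G w - fderiv ℝ G w v‖ ≤ c * ‖v‖ := by
  obtain ⟨η, hη, hclose⟩ := Metric.mem_uniformity_dist.1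
    (hS.uniformContinuousAt_of_continuousAt (fderiv ℝ G)
      (fun _ _ => (hG.continuous_fderiv one_ne_zero).continuousAt) (dist_mem_uniformity hc))
  refine ⟨η, hη, fun w hw v hv => ?_⟩
  have h := (convex_ball w η).norm_image_sub_le_of_norm_hasFDerivWithin_le' (f := G)
    (φ := fderiv ℝ G w) (fun x _ => (hG.differentiable one_ne_zero x).hasFDerivAt.hasFDerivWithinAt)
    (fun x hx => by
      rw [← dist_eq_norm, dist_comm]
      exact (hclose (by rwa [dist_comm, ← mem_ball]) hw).le)
    (mem_ball_self hη) (y := w + v) (by simpa using hv)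
  simpa using h

theorem exists_hasDerivWithinAt_Icc_of_lipschitzWith {X : Type*}
    [NormedAddCommGroup X] [NormedSpace ℝ X] [CompleteSpace X] {v : ℝ → X → X} {y : ℝ}
    (hy : 0 ≤ y) {C A : ℝ≥0} (hv : ∀ t ∈ Icc 0 y, LipschitzWith C (v t))
    (hcont : ∀ x, ContinuousOn (v · x) (Icc 0 y)) (hA : ∀ t ∈ Icc 0 y, ∀ x, ‖v t x‖ ≤ A)
    (x₀ : X) :
    ∃ α : ℝ → X, α 0 = x₀ ∧ ∀ t ∈ Icc 0 y, HasDerivWithinAt α (v t (α t)) (Icc 0 y) t := by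
  have hPL : IsPicardLindelof v (⟨0, left_mem_Icc.2 hy⟩ : Icc 0 y) x₀ (A * y.toNNReal) 0 A C :=
    { lipschitzOnWith := fun t ht => (hv t ht).lipschitzOnWith
      continuousOn := fun x _ => hcont x
      norm_le := fun t ht x _ => hA t ht x
      mul_max_le := by simp [Real.coe_toNNReal _ hy, max_eq_left hy] }
  exact hPL.exists_eq_forall_mem_Icc_hasDerivWithinAt₀

theorem gronwallBound_zero_mul_le {C d t y : ℝ} (hC : 0 ≤ C) (hd : 0 ≤ d) (hty : t ≤ y) :
    gronwallBound 0 C (C * d) t ≤ d * (Real.exp (C * y) - 1) := by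
  rcases hC.eq_or_lt with rfl | hC
  · simp [gronwallBound_K0]
  · simp only [gronwallBound_of_K_ne_0 hC.ne', zero_mul, zero_add, mul_div_cancel_left₀ _ hC.ne']
    gcongr

theorem dist_le_of_hasDerivWithinAt_of_dist_le {X : Type*} [NormedAddCommGroup X]
    [NormedSpace ℝ X] {v w : ℝ → X → X} {y d : ℝ} (hd : 0 ≤ d) {C : ℝ≥0} {α β : ℝ → X}
    (hv : ∀ t ∈ Icc 0 y, LipschitzWith C (v t))
    (hvw : ∀ t ∈ Icc 0 y, ∀ x, dist (w t x) (v t x) ≤ C * d)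
    (hα : ∀ t ∈ Icc 0 y, HasDerivWithinAt α (w t (α t)) (Icc 0 y) t)
    (hβ : ∀ t ∈ Icc 0 y, HasDerivWithinAt β (v t (β t)) (Icc 0 y) t) (h0 : α 0 = β 0) :
    ∀ t ∈ Icc 0 y, dist (α t) (β t) ≤ d * (Real.exp (C * y) - 1) := by
  have hIci : ∀ {γ : ℝ → X} {γ' : ℝ → X}, (∀ t ∈ Icc 0 y, HasDerivWithinAt γ (γ' t) (Icc 0 y) t) →
      ∀ t ∈ Ico 0 y, HasDerivWithinAt γ (γ' t) (Ici t) t := fun h t ht =>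
    (h t (Ico_subset_Icc_self ht)).mono_of_mem_nhdsWithin (Icc_mem_nhdsGE_of_mem ht)
  intro t ht
  have h := dist_le_of_approx_trajectories_ODE_of_mem (s := fun _ => univ) (εg := 0)
    (fun t ht => (hv t (Ico_subset_Icc_self ht)).lipschitzOnWith)
    (fun t ht => (hα t ht).continuousWithinAt) (hIci hα)
    (fun t ht => hvw t (Ico_subset_Icc_self ht) _) (fun _ _ => mem_univ _)
    (fun t ht => (hβ t ht).continuousWithinAt) (hIci hβ)
    (fun t _ => (dist_self _).le) (fun _ _ => mem_univ _) (dist_le_zero.2 h0) t ht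
  rw [add_zero, sub_zero] at h
  exact h.trans (gronwallBound_zero_mul_le C.2 hd ht.2)

theorem abs_sub_le_of_lipschitzOnWith_of_unique {E : Type*} [PseudoMetricSpace E]
    {f : ℝ → ℝ → E → ℝ} {y R ρ : ℝ} (hy : 0 ≤ y) {θ₀ θ : E} {C : ℝ≥0}
    (hf : LipschitzOnWith C (fun w : ℝ × ℝ × E => f w.1 w.2.1 w.2.2)
      (Icc 0 y ×ˢ Icc (-R) R ×ˢ closedBall θ₀ ρ))
    (hθ : θ ∈ closedBall θ₀ ρ) {u₀ u : ℝ → ℝ}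
    (hu₀ : ∀ t ∈ Icc 0 y, HasDerivWithinAt u₀ (f t (u₀ t) θ₀) (Icc 0 y) t)
    (hu₀R : ∀ t ∈ Icc 0 y, |u₀ t| + dist θ θ₀ * (Real.exp (C * y) - 1) ≤ R)
    (huniq : ∀ v : ℝ → ℝ, v 0 = u₀ 0 →
      (∀ t ∈ Icc 0 y, HasDerivWithinAt v (f t (v t) θ) (Icc 0 y) t) → ∀ t ∈ Icc 0 y, v t = u t) :
    ∀ t ∈ Icc 0 y, |u t - u₀ t| ≤ dist θ θ₀ * (Real.exp (C * y) - 1) := by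
  have hd : 0 ≤ dist θ θ₀ * (Real.exp (C * y) - 1) :=
    mul_nonneg dist_nonneg (by simpa using Real.one_le_exp (by positivity))
  have hR : -R ≤ R := by
    have := hu₀R 0 (left_mem_Icc.2 hy)
    linarith [abs_nonneg (u₀ 0)]
  -- the field is clamped to `[-R, R]` in the state variable, which makes it globally Lipschitz
  set cl : ℝ → ℝ := fun x => projIcc (-R) R hR x
  have hcl_mem : ∀ x, cl x ∈ Icc (-R) R := fun x => (projIcc (-R) R hR x).2
  have hcl_eq : ∀ x ∈ Icc (-R) R, cl x = x := fun x hx => by simp [cl, projIcc_of_mem hR hx]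
  have hmem : ∀ t ∈ Icc 0 y, ∀ x, ∀ θ' ∈ closedBall θ₀ ρ,
      ((t, cl x, θ') : ℝ × ℝ × E) ∈ Icc 0 y ×ˢ Icc (-R) R ×ˢ closedBall θ₀ ρ :=
    fun t ht x θ' hθ' => ⟨ht, hcl_mem x, hθ'⟩
  have hLip : ∀ θ' ∈ closedBall θ₀ ρ, ∀ t ∈ Icc 0 y, LipschitzWith C (fun x => f t (cl x) θ') := by
    refine fun θ' hθ' t ht => LipschitzWith.of_dist_le_mul fun x x' => ?_
    refine (hf.dist_le_mul _ (hmem t ht x θ' hθ') _ (hmem t ht x' θ' hθ')).trans ?_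
    have hcl : dist (cl x) (cl x') ≤ dist x x' := by
      have h := (LipschitzWith.projIcc hR).dist_le_mul x x'
      rwa [NNReal.coe_one, one_mul, Subtype.dist_eq] at h
    simpa [Prod.dist_eq] using mul_le_mul_of_nonneg_left hcl C.2
  have hpert : ∀ t ∈ Icc 0 y, ∀ x, dist (f t (cl x) θ) (f t (cl x) θ₀) ≤ C * dist θ θ₀ := by
    intro t ht x
    simpa [Prod.dist_eq] using hf.dist_le_mul _ (hmem t ht x θ hθ) _
      (hmem t ht x θ₀ (mem_closedBall_self (dist_nonneg.trans hθ)))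
  obtain ⟨A, hA⟩ :=
    (isCompact_Icc.prod (isCompact_Icc.prod isCompact_singleton)).exists_bound_of_continuousOn
      (hf.continuousOn.mono
        (prod_mono subset_rfl (prod_mono subset_rfl (singleton_subset_iff.2 hθ))))
  obtain ⟨α, hα0, hα⟩ := exists_hasDerivWithinAt_Icc_of_lipschitzWith hy
    (A := A.toNNReal) (hLip θ hθ)
    (fun x => hf.continuousOn.comp ((continuous_id.prodMk continuous_const).continuousOn)
      (fun t ht => hmem t ht x θ hθ))
    (fun t ht x => (hA (t, cl x, θ) ⟨ht, hcl_mem x, mem_singleton θ⟩).trans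
      (Real.le_coe_toNNReal A)) (u₀ 0)
  have hu₀cl : ∀ t ∈ Icc 0 y, HasDerivWithinAt u₀ (f t (cl (u₀ t)) θ₀) (Icc 0 y) t := fun t ht => by
    rw [hcl_eq _ (abs_le.1 (by linarith [hu₀R t ht, hd]))]
    exact hu₀ t ht
  have hclose := dist_le_of_hasDerivWithinAt_of_dist_le dist_nonneg
    (hLip θ₀ (mem_closedBall_self (dist_nonneg.trans hθ))) hpert hα hu₀cl hα0
  have hαR : ∀ t ∈ Icc 0 y, α t ∈ Icc (-R) R := fun t ht => by
    have h₁ := hclose t ht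
    have h₂ := hu₀R t ht
    rw [Real.dist_eq] at h₁
    exact abs_le.1 (by linarith [abs_sub_abs_le_abs_sub (α t) (u₀ t)])
  have hαu := huniq α hα0 fun t ht => by simpa only [hcl_eq _ (hαR t ht)] using hα t ht
  intro t ht
  rw [← hαu t ht, ← Real.dist_eq]
  exact hclose t ht

theorem eventually_abs_sub_le_mul_dist {E : Type*} [MetricSpace E] [ProperSpace E]
    {f : ℝ → ℝ → E → ℝ} (hf : LocallyLipschitz (fun w : ℝ × ℝ × E => f w.1 w.2.1 w.2.2))
    {y : ℝ} (hy : 0 ≤ y) {θ₀ : E} {u : E → ℝ → ℝ}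
    (hu₀ : ∀ t ∈ Icc 0 y, HasDerivWithinAt (u θ₀) (f t (u θ₀ t) θ₀) (Icc 0 y) t)
    (huniq : ∀ᶠ θ in 𝓝 θ₀, ∀ v : ℝ → ℝ, v 0 = u θ₀ 0 →
      (∀ t ∈ Icc 0 y, HasDerivWithinAt v (f t (v t) θ) (Icc 0 y) t) →
      ∀ t ∈ Icc 0 y, v t = u θ t) :
    ∃ B, ∀ᶠ θ in 𝓝 θ₀, ∀ t ∈ Icc 0 y, |u θ t - u θ₀ t| ≤ B * dist θ θ₀ := by
  obtain ⟨M, hM⟩ := isCompact_Icc.exists_bound_of_continuousOn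
    fun t ht => (hu₀ t ht).continuousWithinAt
  obtain ⟨C, hC⟩ := hf.locallyLipschitzOn.exists_lipschitzOnWith_of_compact
    (isCompact_Icc.prod (isCompact_Icc.prod (isCompact_closedBall θ₀ 1)) :
      IsCompact (Icc 0 y ×ˢ Icc (-(M + 1)) (M + 1) ×ˢ closedBall θ₀ 1))
  set B := Real.exp (C * y) - 1
  have hsmall : ∀ᶠ θ in 𝓝 θ₀, dist θ θ₀ * B < 1 :=
    ((continuous_id.dist continuous_const).mul continuous_const).continuousAt.eventually_lt
      continuousAt_const (by simp)
  refine ⟨B, ?_⟩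
  filter_upwards [huniq, closedBall_mem_nhds θ₀ one_pos, hsmall] with θ huθ hθ hθB t ht
  rw [mul_comm]
  refine abs_sub_le_of_lipschitzOnWith_of_unique hy hC hθ hu₀ (fun t ht => ?_) huθ t ht
  linarith [Real.norm_eq_abs (u θ₀ t) ▸ hM t ht]

theorem eventually_abs_sub_sub_linearization_le {E : Type*} [NormedAddCommGroup E]
    [InnerProductSpace ℝ E] [CompleteSpace E] {f : ℝ → ℝ → E → ℝ}
    (hf : ContDiff ℝ 1 (fun w : ℝ × ℝ × E => f w.1 w.2.1 w.2.2))
    {fΛ : ℝ → ℝ → E → ℝ} (hfΛ : ∀ t L θ, HasDerivAt (fun L' => f t L' θ) (fΛ t L θ) L)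
    {fθ : ℝ → ℝ → E → E} (hfθ : ∀ t L θ, HasGradientAt (fun θ' => f t L θ') (fθ t L θ) θ)
    {y : ℝ} {θ₀ : E} {u : E → ℝ → ℝ} (hu₀ : ContinuousOn (u θ₀) (Icc 0 y)) {B : ℝ}
    (hB : ∀ᶠ θ in 𝓝 θ₀, ∀ t ∈ Icc 0 y, |u θ t - u θ₀ t| ≤ B * dist θ θ₀) {c : ℝ} (hc : 0 < c) :
    ∀ᶠ θ in 𝓝 θ₀, ∀ t ∈ Icc 0 y, |f t (u θ t) θ - f t (u θ₀ t) θ₀ -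
      ((u θ t - u θ₀ t) * fΛ t (u θ₀ t) θ₀ + ⟪fθ t (u θ₀ t) θ₀, θ - θ₀⟫)| ≤ c * ‖θ - θ₀‖ := by
  have hS : IsCompact ((fun t => ((t, u θ₀ t, θ₀) : ℝ × ℝ × E)) '' Icc 0 y) :=
    isCompact_Icc.image_of_continuousOn (continuousOn_id.prodMk (hu₀.prodMk continuousOn_const))
  set B' := max B 1
  have hB' : 0 < B' := lt_max_of_lt_right one_pos
  obtain ⟨η, hη, hTaylor⟩ := hS.exists_forall_norm_image_add_sub_sub_fderiv_le hf
    (div_pos hc hB')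
  have hnear : ∀ᶠ θ in 𝓝 θ₀, B' * dist θ θ₀ < η :=
    (continuous_const.mul (continuous_id.dist continuous_const)).continuousAt.eventually_lt
      continuousAt_const (by simpa using hη)
  filter_upwards [hB, hnear] with θ hθB hθη t ht
  rw [dist_eq_norm] at hθB hθη
  have hv : ‖((0 : ℝ), u θ t - u θ₀ t, θ - θ₀)‖ ≤ B' * ‖θ - θ₀‖ := by
    have hδ := (hθB t ht).trans (mul_le_mul_of_nonneg_right (le_max_left B 1) (norm_nonneg _))
    have hh : ‖θ - θ₀‖ ≤ B' * ‖θ - θ₀‖ :=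
      le_mul_of_one_le_left (norm_nonneg _) (le_max_right B 1)
    simpa [Prod.norm_def] using ⟨hδ, hh⟩
  have h := hTaylor _ (mem_image_of_mem _ ht) _ (hv.trans_lt hθη)
  rw [fderiv_uncurry_apply_zero ((hf.differentiable one_ne_zero) _) (hfΛ _ _ _) (hfθ _ _ _),
    Real.norm_eq_abs] at h
  simp only [Prod.mk_add_mk, add_zero, add_sub_cancel] at h
  calc _ ≤ c / B' * ‖((0 : ℝ), u θ t - u θ₀ t, θ - θ₀)‖ := h
    _ ≤ c / B' * (B' * ‖θ - θ₀‖) := by gcongr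
    _ = c * ‖θ - θ₀‖ := by field_simp

section Adjoint

variable {E : Type*} [NormedAddCommGroup E] [InnerProductSpace ℝ E]

theorem abs_sub_inner_le_of_adjoint {y K ε : ℝ} (hy : 0 ≤ y) {δ d a κ : ℝ → ℝ} {b F : ℝ → E}
    {h : E} (hδ : ∀ t ∈ Icc 0 y, HasDerivWithinAt δ (d t) (Icc 0 y) t)
    (hκ : ∀ t ∈ Icc 0 y, HasDerivWithinAt κ (-κ t * a t) (Icc 0 y) t)
    (hF : ∀ t ∈ Icc 0 y, HasDerivWithinAt F (-κ t • b t) (Icc 0 y) t)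
    (hδ0 : δ 0 = 0) (hκy : κ y = 1) (hFy : F y = 0)
    (hκK : ∀ t ∈ Icc 0 y, |κ t| ≤ K) (hd : ∀ t ∈ Icc 0 y, |d t - (δ t * a t + ⟪b t, h⟫)| ≤ ε) :
    |δ y - ⟪F 0, h⟫| ≤ K * ε * y := by
  have hg : ∀ t ∈ Icc 0 y, HasDerivWithinAt (fun t => κ t * δ t + ⟪F t, h⟫)
      (κ t * (d t - (δ t * a t + ⟪b t, h⟫))) (Icc 0 y) t := by
    intro t ht
    have hinner := (hF t ht).inner ℝ (hasDerivWithinAt_const t (Icc 0 y) h)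
    refine (((hκ t ht).mul (hδ t ht)).add hinner).congr_deriv ?_
    simp only [inner_zero_right, inner_smul_left, RCLike.conj_to_real]
    ring
  have hbound : ∀ t ∈ Icc 0 y, ‖κ t * (d t - (δ t * a t + ⟪b t, h⟫))‖ ≤ K * ε := fun t ht => by
    rw [Real.norm_eq_abs, abs_mul]
    exact mul_le_mul (hκK t ht) (hd t ht) (abs_nonneg _) ((abs_nonneg _).trans (hκK t ht))
  have := (convex_Icc 0 y).norm_image_sub_le_of_norm_hasDerivWithin_le hg hbound
    (left_mem_Icc.2 hy) (right_mem_Icc.2 hy)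
  simpa [hδ0, hκy, hFy, abs_of_nonneg hy] using this

theorem hasGradientAt_of_adjoint [CompleteSpace E] {y : ℝ} (hy : 0 < y) {u d : E → ℝ → ℝ} {θ₀ : E}
    {a κ : ℝ → ℝ} {b F : ℝ → E}
    (hu : ∀ᶠ θ in 𝓝 θ₀, u θ 0 = u θ₀ 0 ∧
      ∀ t ∈ Icc 0 y, HasDerivWithinAt (u θ) (d θ t) (Icc 0 y) t)
    (hlin : ∀ c > 0, ∀ᶠ θ in 𝓝 θ₀, ∀ t ∈ Icc 0 y,
      |d θ t - d θ₀ t - ((u θ t - u θ₀ t) * a t + ⟪b t, θ - θ₀⟫)| ≤ c * ‖θ - θ₀‖)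
    (hκ : ∀ t ∈ Icc 0 y, HasDerivWithinAt κ (-κ t * a t) (Icc 0 y) t)
    (hF : ∀ t ∈ Icc 0 y, HasDerivWithinAt F (-κ t • b t) (Icc 0 y) t)
    (hκy : κ y = 1) (hFy : F y = 0) :
    HasGradientAt (fun θ => u θ y) (F 0) θ₀ := by
  obtain ⟨K, hK⟩ := isCompact_Icc.exists_bound_of_continuousOn
    fun t ht => (hκ t ht).continuousWithinAt
  have hκK : ∀ t ∈ Icc 0 y, |κ t| ≤ |K| + 1 := fun t ht => by
    linarith [hK t ht, le_abs_self K, Real.norm_eq_abs (κ t)]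
  have hu₀ := (hu.self_of_nhds).2
  rw [hasGradientAt_iff_isLittleO, Asymptotics.isLittleO_iff]
  intro c hc
  have hKy : 0 < (|K| + 1) * y := by positivity
  filter_upwards [hu, hlin _ (div_pos hc hKy)] with θ ⟨huθ0, huθ⟩ hlinθ
  have hadj := abs_sub_inner_le_of_adjoint hy.le (δ := fun t => u θ t - u θ₀ t)
    (fun t ht => (huθ t ht).sub (hu₀ t ht)) hκ hF (sub_eq_zero.2 huθ0) hκy hFy hκK hlinθ
  calc ‖u θ y - u θ₀ y - ⟪F 0, θ - θ₀⟫‖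
      ≤ (|K| + 1) * (c / ((|K| + 1) * y) * ‖θ - θ₀‖) * y := (Real.norm_eq_abs _).trans_le hadj
    _ = c * ‖θ - θ₀‖ := by field_simp

end Adjoint

theorem sub_eq_integral_of_hasDerivWithinAt_neg {E : Type*} [NormedAddCommGroup E]
    [NormedSpace ℝ E] [CompleteSpace E] {a b : ℝ} (hab : a ≤ b) {F g : ℝ → E}
    (hF : ∀ t ∈ Icc a b, HasDerivWithinAt F (-g t) (Icc a b) t) (hg : ContinuousOn g (Icc a b)) :
    F a - F b = ∫ t in a..b, g t := by
  have hFTC := intervalIntegral.integral_eq_sub_of_hasDerivAt_of_le hab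
    (fun t ht => (hF t ht).continuousWithinAt)
    (fun t ht => (hF t (Ioo_subset_Icc_self ht)).hasDerivAt (Icc_mem_nhds ht.1 ht.2))
    (hg.neg.intervalIntegrable_of_Icc hab)
  rw [intervalIntegral.integral_neg, ← neg_sub] at hFTC
  exact (neg_injective hFTC).symm

theorem stmt_12_general
    (p : ℕ)
    (f : ℝ → ℝ → EuclideanSpace ℝ (Fin p) → ℝ)
    (hf : ContDiff ℝ 1 (fun w : ℝ × ℝ × EuclideanSpace ℝ (Fin p) => f w.1 w.2.1 w.2.2))
    -- partial derivative of f with respect to its second (scalar) argument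
    (fΛ : ℝ → ℝ → EuclideanSpace ℝ (Fin p) → ℝ)
    (hfΛ : ∀ t L θ, HasDerivAt (fun L' => f t L' θ) (fΛ t L θ) L)
    -- gradient of f with respect to its third argument
    (fθ : ℝ → ℝ → EuclideanSpace ℝ (Fin p) → EuclideanSpace ℝ (Fin p))
    (hfθ : ∀ t L θ, HasGradientAt (fun θ' => f t L θ') (fθ t L θ) θ)
    (θ₀ : EuclideanSpace ℝ (Fin p)) (y : ℝ) (hy : 0 < y)
    -- Λ(·;θ) is the unique solution of the initial value problem on [0,y]
    -- for every θ in a neighborhood of θ₀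
    (Λ : EuclideanSpace ℝ (Fin p) → ℝ → ℝ)
    (U : Set (EuclideanSpace ℝ (Fin p))) (hU : U ∈ nhds θ₀)
    (hΛ0 : ∀ θ ∈ U, Λ θ 0 = 0)
    (hΛ : ∀ θ ∈ U, ∀ t ∈ Icc 0 y,
      HasDerivWithinAt (Λ θ) (f t (Λ θ t) θ) (Icc 0 y) t)
    (hΛuniq : ∀ θ ∈ U, ∀ Λ' : ℝ → ℝ, Λ' 0 = 0 →
      (∀ t ∈ Icc 0 y, HasDerivWithinAt Λ' (f t (Λ' t) θ) (Icc 0 y) t) →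
      ∀ t ∈ Icc 0 y, Λ' t = Λ θ t)
    -- κ solves the backward adjoint ODE with terminal condition κ(y) = 1
    (κ : ℝ → ℝ)
    (hκy : κ y = 1)
    (hκ : ∀ t ∈ Icc 0 y, HasDerivWithinAt κ
      (-(κ t) * fΛ t (Λ θ₀ t) θ₀) (Icc 0 y) t)
    -- F₂ solves the adjoint sensitivity ODE with terminal condition F₂(y) = 0
    (F₂ : ℝ → EuclideanSpace ℝ (Fin p))
    (hF₂y : F₂ y = 0)
    (hF₂ : ∀ t ∈ Icc 0 y, HasDerivWithinAt F₂
      (-(κ t) • fθ t (Λ θ₀ t) θ₀) (Icc 0 y) t) :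
    HasGradientAt (fun θ => Λ θ y) (F₂ 0) θ₀ ∧
      F₂ 0 = ∫ t in (0:ℝ)..y, κ t • fθ t (Λ θ₀ t) θ₀ := by
  have hθ₀U : θ₀ ∈ U := mem_of_mem_nhds hU
  have hΛ₀cont : ContinuousOn (Λ θ₀) (Icc 0 y) := fun t ht => (hΛ θ₀ hθ₀U t ht).continuousWithinAt
  have hκcont : ContinuousOn κ (Icc 0 y) := fun t ht => (hκ t ht).continuousWithinAt
  obtain ⟨B, hB⟩ := eventually_abs_sub_le_mul_dist hf.locallyLipschitz hy.le (hΛ θ₀ hθ₀U)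
    (by filter_upwards [hU] with θ hθ v hv0 hv
        exact hΛuniq θ hθ v (hv0.trans (hΛ0 θ₀ hθ₀U)) hv)
  refine ⟨hasGradientAt_of_adjoint hy (d := fun θ t => f t (Λ θ t) θ) ?_
    (fun c hc => eventually_abs_sub_sub_linearization_le hf hfΛ hfθ hΛ₀cont hB hc) hκ hF₂ hκy hF₂y,
    ?_⟩
  · filter_upwards [hU] with θ hθ
    exact ⟨(hΛ0 θ hθ).trans (hΛ0 θ₀ hθ₀U).symm, hΛ θ hθ⟩
  · have hfθcont : ContinuousOn (fun t => fθ t (Λ θ₀ t) θ₀) (Icc 0 y) :=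
      (continuous_uncurry_of_hasGradientAt hf hfθ).comp_continuousOn
        (continuousOn_id.prodMk (hΛ₀cont.prodMk continuousOn_const))
    have hFTC := sub_eq_integral_of_hasDerivWithinAt_neg hy.le
      (g := fun t => κ t • fθ t (Λ θ₀ t) θ₀) (fun t ht => by simpa [neg_smul] using hF₂ t ht)
      (hκcont.smul hfθcont)
    rwa [hF₂y, sub_zero] at hFTC

/-- Adjoint sensitivity analysis: the gradient of `θ ↦ Λ(y; θ)` at `θ₀` equals `F₂(0)`,
where `κ' = −κ · ∂_Λ f`, `κ(y) = 1`, and `F₂' = −κ · ∂_θ f`, `F₂(y) = 0`; moreover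
`F₂(0) = ∫₀^y κ(t) · ∂_θ f(t, Λ(t;θ₀), θ₀) dt`. -/
theorem stmt_12
    (p : ℕ) (hp : 1 ≤ p)
    (f : ℝ → ℝ → EuclideanSpace ℝ (Fin p) → ℝ)
    (hf : ContDiff ℝ 1 (fun w : ℝ × ℝ × EuclideanSpace ℝ (Fin p) => f w.1 w.2.1 w.2.2))
    -- partial derivative of f with respect to its second (scalar) argument
    (fΛ : ℝ → ℝ → EuclideanSpace ℝ (Fin p) → ℝ)
    (hfΛ : ∀ t L θ, HasDerivAt (fun L' => f t L' θ) (fΛ t L θ) L)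
    -- gradient of f with respect to its third argument
    (fθ : ℝ → ℝ → EuclideanSpace ℝ (Fin p) → EuclideanSpace ℝ (Fin p))
    (hfθ : ∀ t L θ, HasGradientAt (fun θ' => f t L θ') (fθ t L θ) θ)
    (θ₀ : EuclideanSpace ℝ (Fin p)) (y : ℝ) (hy : 0 < y)
    -- Λ(·;θ) is the unique solution of the initial value problem on [0,y]
    -- for every θ in a neighborhood of θ₀
    (Λ : EuclideanSpace ℝ (Fin p) → ℝ → ℝ)
    (U : Set (EuclideanSpace ℝ (Fin p))) (hU : U ∈ nhds θ₀)
    (hΛ0 : ∀ θ ∈ U, Λ θ 0 = 0)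
    (hΛ : ∀ θ ∈ U, ∀ t ∈ Icc 0 y,
      HasDerivWithinAt (Λ θ) (f t (Λ θ t) θ) (Icc 0 y) t)
    (hΛuniq : ∀ θ ∈ U, ∀ Λ' : ℝ → ℝ, Λ' 0 = 0 →
      (∀ t ∈ Icc 0 y, HasDerivWithinAt Λ' (f t (Λ' t) θ) (Icc 0 y) t) →
      ∀ t ∈ Icc 0 y, Λ' t = Λ θ t)
    -- κ solves the backward adjoint ODE with terminal condition κ(y) = 1
    (κ : ℝ → ℝ)
    (hκy : κ y = 1)
    (hκ : ∀ t ∈ Icc 0 y, HasDerivWithinAt κ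
      (-(κ t) * fΛ t (Λ θ₀ t) θ₀) (Icc 0 y) t)
    -- F₂ solves the adjoint sensitivity ODE with terminal condition F₂(y) = 0
    (F₂ : ℝ → EuclideanSpace ℝ (Fin p))
    (hF₂y : F₂ y = 0)
    (hF₂ : ∀ t ∈ Icc 0 y, HasDerivWithinAt F₂
      (-(κ t) • fθ t (Λ θ₀ t) θ₀) (Icc 0 y) t) :
    HasGradientAt (fun θ => Λ θ y) (F₂ 0) θ₀ ∧
      F₂ 0 = ∫ t in (0:ℝ)..y, κ t • fθ t (Λ θ₀ t) θ₀ :=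
  stmt_12_general p f hf fΛ hfΛ fθ hfθ θ₀ y hy Λ U hU hΛ0 hΛ hΛuniq κ hκy hκ F₂ hF₂y hF₂
end
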